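/- arXiv:0902.0216 — 7 statements merged into one kernel-verified Lean document; each statement's English description precedes it below -/
import Mathlib

section
/- Let F be a distribution function, n ≥ 1, and set w_j = [1-F]^{-1}(j/n) for j = 1,…,n. Let F_n(x) = (1/n) Σ_{j=1}^n 1{w_j ≤ x} be the empirical distribution of the weights. Then F_n(x) = ((⌊n F(x)⌋ + 1)/n) ∧ 1 for all x ≥ 0. -/
/-!
The weights are quantiles of `1 - F`: by right-continuity `w_j ≤ x ↔ 1 - j/n ≤ F x`, i.e.
`n - j ≤ ⌊n F(x)⌋`. Hence `w_j ≤ x` holds exactly for the `j ∈ [1, n]` with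
`j ≥ n - ⌊n F(x)⌋`, and there are `min (⌊n F(x)⌋ + 1) n` of them (`w_n = 0 ≤ x` always counts).
-/

open Set Filter

/- Right-continuity makes the superlevel set `{s | c ≤ F s}` closed, so it contains its
infimum. -/
theorem Monotone.csInf_le_iff_of_continuousWithinAt_Ici {F : ℝ → ℝ} (hmono : Monotone F)
    (hrc : ∀ x, ContinuousWithinAt F (Ici x) x) {c : ℝ}
    (hne : {s | c ≤ F s}.Nonempty) (hbdd : BddBelow {s | c ≤ F s}) (x : ℝ) :
    sInf {s | c ≤ F s} ≤ x ↔ c ≤ F x := by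
  refine ⟨fun hle => ?_, fun hx => csInf_le hbdd hx⟩
  have hright : Tendsto F (nhdsWithin x (Ioi x)) (nhds (F x)) :=
    (hrc x).mono_left (nhdsWithin_mono x Ioi_subset_Ici_self)
  refine _root_.ge_of_tendsto hright ?_
  filter_upwards [self_mem_nhdsWithin] with t (ht : x < t)
  obtain ⟨s, hs, hst⟩ := exists_lt_of_csInf_lt hne (hle.trans_lt ht)
  exact hs.trans (hmono hst.le)

theorem card_filter_Icc_le_add (n m : ℕ) (hm : m ≤ n) :
    ((Finset.Icc 1 n).filter (fun j => n ≤ m + j)).card = min (m + 1) n := by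
  have h : (Finset.Icc 1 n).filter (fun j => n ≤ m + j) = Finset.Icc (max 1 (n - m)) n := by
    ext j
    simp only [Finset.mem_filter, Finset.mem_Icc, max_le_iff]
    omega
  rw [h, Nat.card_Icc]
  omega

section Weights

variable {F : ℝ → ℝ} {n j : ℕ}

theorem sInf_one_sub_le_div_le_iff (hmono : Monotone F)
    (hrc : ∀ x, ContinuousWithinAt F (Ici x) x)
    (htop : Tendsto F atTop (nhds 1)) (hsupp : ∀ x < (0:ℝ), F x = 0)
    (hj : 1 ≤ j) (hjn : j < n) (x : ℝ) :
    sInf {s : ℝ | 1 - F s ≤ (j:ℝ)/n} ≤ x ↔ 1 - (j:ℝ)/n ≤ F x := by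
  have hn : (0:ℝ) < n := Nat.cast_pos.2 (by omega)
  have hpos : 0 < 1 - (j:ℝ)/n := by
    rw [sub_pos, div_lt_one hn]
    exact_mod_cast hjn
  have hset : {s : ℝ | 1 - F s ≤ (j:ℝ)/n} = {s | 1 - (j:ℝ)/n ≤ F s} := by
    ext s
    exact sub_le_comm (a := (1:ℝ))
  rw [hset]
  refine hmono.csInf_le_iff_of_continuousWithinAt_Ici hrc ?_ ?_ x
  · have hj0 : (0:ℝ) < j / n := div_pos (by exact_mod_cast hj) hn
    exact (htop.eventually (eventually_gt_nhds (by linarith))).exists.imp fun _ => le_of_lt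
  · refine ⟨0, fun s (hs : _ ≤ F s) => ?_⟩
    by_contra! hs0
    rw [hsupp s hs0] at hs
    linarith

theorem one_sub_div_le_iff_le_add_floor {x : ℝ} (hF : 0 ≤ F x) (hjn : j ≤ n) (hn : 0 < n) :
    1 - (j:ℝ)/n ≤ F x ↔ n ≤ ⌊(n:ℝ) * F x⌋₊ + j := by
  have hn' : (0:ℝ) < n := by exact_mod_cast hn
  rw [← tsub_le_iff_right, Nat.le_floor_iff (by positivity), Nat.cast_sub hjn,
    ← div_le_iff₀' hn', sub_div, div_self hn'.ne']

end Weights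

theorem stmt_1_general (F : ℝ → ℝ) (hmono : Monotone F)
    (hrc : ∀ x, ContinuousWithinAt F (Set.Ici x) x)
    (htop : Tendsto F atTop (nhds 1))
    (hsupp : ∀ x < (0:ℝ), F x = 0)
    (n : ℕ) (hn : 1 ≤ n) (w : ℕ → ℝ)
    (hw : ∀ j, 1 ≤ j → j < n → w j = sInf {s : ℝ | 1 - F s ≤ (j:ℝ)/n})
    (hwn : w n = 0) :
    ∀ x : ℝ, 0 ≤ x →
      (1/(n:ℝ)) * ((Finset.Icc 1 n).filter (fun j => w j ≤ x)).card
        = min (((⌊(n:ℝ) * F x⌋ : ℝ) + 1)/(n:ℝ)) 1 := by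
  intro x hx
  have hF0 : 0 ≤ F x := (hsupp _ (by norm_num : min x (-1) < 0)).symm.le.trans
    (hmono (min_le_left x (-1)))
  have hF1 : F x ≤ 1 := hmono.ge_of_tendsto htop x
  set m := ⌊(n:ℝ) * F x⌋₊
  have hmn : m ≤ n := Nat.floor_le_of_le (mul_le_of_le_one_right n.cast_nonneg hF1)
  have key : ∀ j ∈ Finset.Icc 1 n, w j ≤ x ↔ n ≤ m + j := by
    intro j hj
    obtain ⟨hj1, hjn⟩ := Finset.mem_Icc.1 hj
    rcases hjn.lt_or_eq with hjn | rfl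
    · rw [hw j hj1 hjn, sInf_one_sub_le_div_le_iff hmono hrc htop hsupp hj1 hjn,
        one_sub_div_le_iff_le_add_floor hF0 hjn.le hn]
    · simp [hwn, hx]
  have hn0 : (0:ℝ) < n := by exact_mod_cast hn
  rw [Finset.filter_congr key, card_filter_Icc_le_add n m hmn,
    ← natCast_floor_eq_intCast_floor (by positivity), Nat.cast_min, Nat.cast_succ,
    one_div_mul_eq_div, ← min_div_div_right hn0.le, div_self hn0.ne']

/-- explicit formula for the empirical distribution function of the
weights `w_j = [1-F]⁻¹(j/n)`. -/
theorem stmt_1 (F : ℝ → ℝ) (hmono : Monotone F)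
    (hrc : ∀ x, ContinuousWithinAt F (Set.Ici x) x)
    (hbot : Tendsto F atBot (nhds 0))
    (htop : Tendsto F atTop (nhds 1))
    (hsupp : ∀ x < (0:ℝ), F x = 0)
    (n : ℕ) (hn : 1 ≤ n) (w : ℕ → ℝ)
    (hw : ∀ j, 1 ≤ j → j < n → w j = sInf {s : ℝ | 1 - F s ≤ (j:ℝ)/n})
    (hwn : w n = 0) :
    ∀ x : ℝ, 0 ≤ x →
      (1/(n:ℝ)) * ((Finset.Icc 1 n).filter (fun j => w j ≤ x)).card
        = min (((⌊(n:ℝ) * F x⌋ : ℝ) + 1)/(n:ℝ)) 1 :=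
  stmt_1_general F hmono hrc htop hsupp n hn w hw hwn
end

section
/- Let W have distribution function F on [0,∞) and let W_n have distribution function F_n satisfying F(x) ≤ F_n(x) ≤ F(x) + 1/n for all x, with F_n(w_1) = 1. Let h : [0,∞) → ℂ be differentiable with h(0) = 0 and such that x ↦ |h'(x)|(1-F(x)) is integrable on [0,∞). Then |E[h(W_n)] - E[h(W)]| ≤ ∫_{w_1}^∞ |h'(x)|(1-F(x)) dx + (1/n) ∫_0^{w_1} |h'(x)| dx. -/
/-!
Writing `h x = ∫ t in 0..x, h' t` and swapping the integrals (Fubini) gives the tail formula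
`E[h(W)] = ∫ t in Ioi 0, P(W > t) • h' t`, so `E[h(W_n)] - E[h(W)]` is the integral of
`(P(W_n > t) - P(W > t)) • h' t`. On `(0, w₁]` the weight is at most `1/n` in absolute value,
since `F ≤ F_n ≤ F + 1/n`; beyond `w₁` the tail of `W_n` vanishes and what is left is
`P(W > t) ≤ 1 - F t`.
-/

open MeasureTheory Set

section TailFormula

variable {E : Type*} [NormedAddCommGroup E] [NormedSpace ℝ E] [CompleteSpace E] {h h' : ℝ → E}

lemma stronglyMeasurable_of_hasDerivAt (hderiv : ∀ x, HasDerivAt h (h' x) x) :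
    StronglyMeasurable h' := by
  rw [show h' = deriv h from funext fun x => (hderiv x).deriv.symm]
  exact stronglyMeasurable_deriv h

lemma integral_Ioo_zero_eq_of_hasDerivAt (hderiv : ∀ x, HasDerivAt h (h' x) x) (h0 : h 0 = 0)
    {x : ℝ} (hx : 0 ≤ x) (hint : IntegrableOn h' (Ioo 0 x)) :
    ∫ t in Ioo 0 x, h' t = h x := by
  rw [← integral_Ioc_eq_integral_Ioo, ← intervalIntegral.integral_of_le hx,
    intervalIntegral.integral_eq_sub_of_hasDerivAt (fun t _ => hderiv t)
      ((intervalIntegrable_iff_integrableOn_Ioo_of_le hx).2 hint), h0, sub_zero]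

theorem integral_eq_setIntegral_measureReal_Ioi_smul (ν : Measure ℝ) [IsFiniteMeasure ν]
    (hsupp : ν (Iio 0) = 0) (hderiv : ∀ x, HasDerivAt h (h' x) x) (h0 : h 0 = 0)
    (hint : IntegrableOn (fun t => ν.real (Ioi t) • h' t) (Ioi 0)) :
    ∫ x, h x ∂ν = ∫ t in Ioi 0, ν.real (Ioi t) • h' t := by
  set f : ℝ × ℝ → E := {p | p.2 ∈ Ioo 0 p.1}.indicator (fun p => h' p.2)
  have hf_meas : StronglyMeasurable f :=
    ((stronglyMeasurable_of_hasDerivAt hderiv).comp_measurable measurable_snd).indicator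
      ((measurableSet_lt measurable_const measurable_snd).inter
        (measurableSet_lt measurable_snd measurable_fst))
  have hf_Ioo : ∀ x t, f (x, t) = (Ioo 0 x).indicator h' t := fun _ _ => rfl
  have hf_Ioi : ∀ x t,
      f (x, t) = (Ioi 0).indicator (fun t => (Ioi t).indicator (fun _ => h' t) x) t := by
    intro x t
    simp only [hf_Ioo, indicator, mem_Ioo, mem_Ioi]
    split_ifs <;> tauto
  have hintegral_x : ∀ t,
      ∫ x, f (x, t) ∂ν = (Ioi 0).indicator (fun t => ν.real (Ioi t) • h' t) t := by
    intro t
    by_cases ht : 0 < t <;> simp [hf_Ioi, ht, integral_indicator_const _ measurableSet_Ioi]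
  have hf_int : Integrable f (ν.prod volume) := by
    refine (integrable_prod_iff' hf_meas.aestronglyMeasurable).2 ⟨ae_of_all _ fun t => ?_, ?_⟩
    · by_cases ht : 0 < t
      · simpa [hf_Ioi, ht] using (integrable_const (h' t)).indicator measurableSet_Ioi
      · simp [hf_Ioi, ht]
    · refine ((integrable_indicator_iff measurableSet_Ioi).2 hint.norm).congr
        (ae_of_all _ fun t => ?_)
      by_cases ht : 0 < t
      · simp [hf_Ioi, ht, norm_indicator_eq_indicator_norm, norm_smul,
          integral_indicator_const _ measurableSet_Ioi]
      · simp [hf_Ioi, ht]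
  have hintegral_t : ∀ᵐ x ∂ν, ∫ t, f (x, t) = h x := by
    have hnonneg : ∀ᵐ x ∂ν, 0 ≤ x :=
      ae_iff.2 (measure_mono_null (fun _ hx => not_le.1 hx) hsupp)
    filter_upwards [hnonneg, hf_int.prod_right_ae] with x hx hint_x
    simp only [hf_Ioo] at hint_x ⊢
    rw [integral_indicator measurableSet_Ioo]
    exact integral_Ioo_zero_eq_of_hasDerivAt hderiv h0 hx
      ((integrable_indicator_iff measurableSet_Ioo).1 hint_x)
  calc ∫ x, h x ∂ν = ∫ x, (∫ t, f (x, t)) ∂ν := (integral_congr_ae hintegral_t).symm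
    _ = ∫ t, ∫ x, f (x, t) ∂ν := integral_integral_swap (f := fun x t => f (x, t)) hf_int
    _ = ∫ t in Ioi 0, ν.real (Ioi t) • h' t := by
      simp only [hintegral_x]
      exact integral_indicator measurableSet_Ioi

end TailFormula

lemma measurable_measureReal_Ioi (μ : Measure ℝ) [IsFiniteMeasure μ] :
    Measurable fun t => μ.real (Ioi t) :=
  Antitone.measurable fun _ _ hst => measureReal_mono (Ioi_subset_Ioi hst)

section Integrability

variable {E : Type*} [NormedAddCommGroup E] [NormedSpace ℝ E]

lemma integrableOn_measureReal_Ioi_smul (μ : Measure ℝ) [IsFiniteMeasure μ] {f : ℝ → E}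
    {g : ℝ → ℝ} {s : Set ℝ} (hs : MeasurableSet s) (hf : AEStronglyMeasurable f)
    (hg : IntegrableOn g s) (hfg : ∀ t ∈ s, μ.real (Ioi t) * ‖f t‖ ≤ g t) :
    IntegrableOn (fun t => μ.real (Ioi t) • f t) s := by
  refine hg.mono' ((measurable_measureReal_Ioi μ).aestronglyMeasurable.smul hf).restrict
    ((ae_restrict_iff' hs).2 (ae_of_all _ fun t ht => ?_))
  rw [norm_smul, Real.norm_of_nonneg measureReal_nonneg]
  exact hfg t ht

lemma norm_setIntegral_Ioi_le_of_norm_le {f : ℝ → E} {g₁ g₂ : ℝ → ℝ} {a b : ℝ} (hab : a ≤ b)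
    (hf : IntegrableOn f (Ioi a)) (hg₁ : IntegrableOn g₁ (Ioc a b)) (hg₂ : IntegrableOn g₂ (Ioi b))
    (hfg₁ : ∀ t ∈ Ioc a b, ‖f t‖ ≤ g₁ t) (hfg₂ : ∀ t ∈ Ioi b, ‖f t‖ ≤ g₂ t) :
    ‖∫ t in Ioi a, f t‖ ≤ (∫ t in Ioc a b, g₁ t) + ∫ t in Ioi b, g₂ t := by
  rw [← Ioc_union_Ioi_eq_Ioi hab, setIntegral_union (Ioc_disjoint_Ioi le_rfl) measurableSet_Ioi
    (hf.mono_set Ioc_subset_Ioi_self) (hf.mono_set (Ioi_subset_Ioi hab))]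
  exact (norm_add_le _ _).trans (add_le_add
    (norm_integral_le_of_norm_le hg₁ ((ae_restrict_iff' measurableSet_Ioc).2 (ae_of_all _ hfg₁)))
    (norm_integral_le_of_norm_le hg₂ ((ae_restrict_iff' measurableSet_Ioi).2 (ae_of_all _ hfg₂))))

end Integrability

section DistributionFunction

variable {μ ν : Measure ℝ} [IsProbabilityMeasure μ] [IsProbabilityMeasure ν] {F G : ℝ → ℝ}

-- `ENNReal.ofReal` truncates at `0`, so `F` is only determined by `μ` where it is nonnegative.
lemma measureReal_Ioi_eq_one_sub_max (hF : ∀ x, μ (Iic x) = ENNReal.ofReal (F x)) (x : ℝ) :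
    μ.real (Ioi x) = 1 - max (F x) 0 := by
  rw [← compl_Iic, measureReal_compl measurableSet_Iic, probReal_univ, measureReal_def, hF,
    ENNReal.toReal_ofReal']

lemma measureReal_Ioi_le_one_sub (hF : ∀ x, μ (Iic x) = ENNReal.ofReal (F x)) (x : ℝ) :
    μ.real (Ioi x) ≤ 1 - F x := by
  rw [measureReal_Ioi_eq_one_sub_max hF]
  linarith [le_max_left (F x) 0]

lemma measureReal_Ioi_eq_zero_of_le (hF : ∀ x, μ (Iic x) = ENNReal.ofReal (F x)) {w x : ℝ}
    (hw : F w = 1) (hwx : w ≤ x) : μ.real (Ioi x) = 0 := by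
  refine le_antisymm ?_ measureReal_nonneg
  calc μ.real (Ioi x) ≤ μ.real (Ioi w) := measureReal_mono (Ioi_subset_Ioi hwx)
    _ = 0 := by simp [measureReal_Ioi_eq_one_sub_max hF, hw]

lemma abs_measureReal_Ioi_sub_le (hF : ∀ x, μ (Iic x) = ENNReal.ofReal (F x))
    (hG : ∀ x, ν (Iic x) = ENNReal.ofReal (G x)) {ε : ℝ} (x : ℝ) (hFG : F x ≤ G x)
    (hGF : G x ≤ F x + ε) : |ν.real (Ioi x) - μ.real (Ioi x)| ≤ ε := by
  rw [measureReal_Ioi_eq_one_sub_max hF, measureReal_Ioi_eq_one_sub_max hG,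
    sub_sub_sub_cancel_left, abs_sub_comm]
  exact (abs_max_sub_max_le_abs _ _ _).trans (abs_le.2 ⟨by linarith, by linarith⟩)

end DistributionFunction

theorem stmt_3_general (μ μn : Measure ℝ) [IsProbabilityMeasure μ] [IsProbabilityMeasure μn]
    (F Fn : ℝ → ℝ) (n : ℕ) (w1 : ℝ) (hw1 : 0 ≤ w1)
    (hF : ∀ x, μ (Set.Iic x) = ENNReal.ofReal (F x))
    (hFn : ∀ x, μn (Set.Iic x) = ENNReal.ofReal (Fn x))
    (hsupp : μ (Set.Iio 0) = 0) (hsuppn : μn (Set.Iio 0) = 0)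
    (hle : ∀ x, F x ≤ Fn x) (hle' : ∀ x, Fn x ≤ F x + 1/n)
    (hFnw1 : Fn w1 = 1)
    (h : ℝ → ℂ) (h' : ℝ → ℂ) (hderiv : ∀ x, HasDerivAt h (h' x) x)
    (h0 : h 0 = 0)
    (hint : IntegrableOn (fun x => ‖h' x‖ * (1 - F x)) (Set.Ici 0))
    (hint2 : IntegrableOn (fun x => ‖h' x‖) (Set.Icc 0 w1)) :
    ‖(∫ x, h x ∂μn) - ∫ x, h x ∂μ‖ ≤
      (∫ x in Set.Ici w1, ‖h' x‖ * (1 - F x)) +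
        (1/(n:ℝ)) * ∫ x in Set.Icc 0 w1, ‖h' x‖ := by
  have hh' : AEStronglyMeasurable h' :=
    (stronglyMeasurable_of_hasDerivAt hderiv).aestronglyMeasurable
  have hμn_far : ∀ t ∈ Ioi w1, μn.real (Ioi t) = 0 := fun _ ht =>
    measureReal_Ioi_eq_zero_of_le hFn hFnw1 (le_of_lt ht)
  have hμ_int : IntegrableOn (fun t => μ.real (Ioi t) • h' t) (Ioi 0) :=
    integrableOn_measureReal_Ioi_smul μ measurableSet_Ioi hh' (hint.mono_set Ioi_subset_Ici_self)
      fun t _ => by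
        rw [mul_comm]
        exact mul_le_mul_of_nonneg_left (measureReal_Ioi_le_one_sub hF t) (norm_nonneg _)
  have hμn_int : IntegrableOn (fun t => μn.real (Ioi t) • h' t) (Ioi 0) := by
    rw [← Ioc_union_Ioi_eq_Ioi hw1]
    refine .union (integrableOn_measureReal_Ioi_smul μn measurableSet_Ioc hh'
      (hint2.mono_set Ioc_subset_Icc_self) fun t _ => mul_le_of_le_one_left (norm_nonneg _)
        measureReal_le_one) ?_
    exact integrableOn_zero.congr_fun (fun t ht => by simp [hμn_far t ht]) measurableSet_Ioi
  have hdiff : (∫ x, h x ∂μn) - ∫ x, h x ∂μ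
      = ∫ t in Ioi 0, μn.real (Ioi t) • h' t - μ.real (Ioi t) • h' t := by
    rw [integral_eq_setIntegral_measureReal_Ioi_smul _ hsuppn hderiv h0 hμn_int,
      integral_eq_setIntegral_measureReal_Ioi_smul _ hsupp hderiv h0 hμ_int,
      integral_sub hμn_int hμ_int]
  rw [hdiff, add_comm, integral_Ici_eq_integral_Ioi, integral_Icc_eq_integral_Ioc,
    ← integral_const_mul]
  refine norm_setIntegral_Ioi_le_of_norm_le hw1 (hμn_int.sub hμ_int)
    ((hint2.mono_set Ioc_subset_Icc_self).const_mul _) (hint.mono_set (Ioi_subset_Ici hw1))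
    (fun t _ => ?_) (fun t ht => ?_)
  · rw [← sub_smul, norm_smul, Real.norm_eq_abs]
    exact mul_le_mul_of_nonneg_right
      (abs_measureReal_Ioi_sub_le hF hFn t (hle t) (hle' t)) (norm_nonneg _)
  · rw [hμn_far t ht, zero_smul, zero_sub, norm_neg, norm_smul,
      Real.norm_of_nonneg measureReal_nonneg, mul_comm]
    exact mul_le_mul_of_nonneg_left (measureReal_Ioi_le_one_sub hF t) (norm_nonneg _)

/-- comparison of expectations of a differentiable function under two
stochastically ordered distributions `F ≤ F_n ≤ F + 1/n` with `F_n(w₁) = 1`. -/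
theorem stmt_3 (μ μn : Measure ℝ) [IsProbabilityMeasure μ] [IsProbabilityMeasure μn]
    (F Fn : ℝ → ℝ) (n : ℕ) (hn : 1 ≤ n) (w1 : ℝ) (hw1 : 0 ≤ w1)
    (hF : ∀ x, μ (Set.Iic x) = ENNReal.ofReal (F x))
    (hFn : ∀ x, μn (Set.Iic x) = ENNReal.ofReal (Fn x))
    (hsupp : μ (Set.Iio 0) = 0) (hsuppn : μn (Set.Iio 0) = 0)
    (hle : ∀ x, F x ≤ Fn x) (hle' : ∀ x, Fn x ≤ F x + 1/n)
    (hFnw1 : Fn w1 = 1)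
    (h : ℝ → ℂ) (h' : ℝ → ℂ) (hderiv : ∀ x, HasDerivAt h (h' x) x)
    (h0 : h 0 = 0)
    (hint : IntegrableOn (fun x => ‖h' x‖ * (1 - F x)) (Set.Ici 0))
    (hint2 : IntegrableOn (fun x => ‖h' x‖) (Set.Icc 0 w1))
    (hinth : Integrable h μ) (hinthn : Integrable h μn) :
    ‖(∫ x, h x ∂μn) - ∫ x, h x ∂μ‖ ≤
      (∫ x in Set.Ici w1, ‖h' x‖ * (1 - F x)) +
        (1/(n:ℝ)) * ∫ x in Set.Icc 0 w1, ‖h' x‖ :=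
  stmt_3_general μ μn F Fn n w1 hw1 hF hFn hsupp hsuppn hle hle' hFnw1 h h' hderiv h0 hint hint2
end

section
/- For an inhomogeneous random graph in which each edge ij (1 ≤ i < j ≤ n) is present independently with probability p_{ij}, and for every k ∈ [n], the variance of Z_{≥k} = Σ_{v} 1{|C(v)| ≥ k} satisfies Var(Z_{≥k}) ≤ n · E[|C(V_n)| · 1{|C(V_n)| ≥ k}], where V_n is uniform on [n]. -/
/-!
Write `Var Z_{≥k} = ∑_{i,j} Cov(X_i, X_j)` with `X_v = 1{|C(v)| ≥ k}`. On `{i ↔ j}` bound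
`X_i X_j ≤ X_j`; summing `1{i ↔ j}` over `i` produces `|C(j)|`. Off `{i ↔ j}`, split according
to the value `S ∌ j` of `C(i)`: the event `{C(i) = S}` depends only on the edges meeting `S`,
while on that event `C(j)` is the cluster of `j` in the graph of edges avoiding `S`, which depends
only on the other edges and is no larger than `C(j)`. Independence of the edges gives
`E[1{C(i) = S} X_j] ≤ P(C(i) = S) E[X_j]`, and summing over `S` with `|S| ≥ k` gives
`E[1{i ↮ j} X_i X_j] ≤ E[X_i] E[X_j]`, a disjoint-occurrence (BK) bound.
-/

open MeasureTheory ProbabilityTheory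
open scoped ENNReal

namespace SimpleGraph

variable {V : Type*} {G H : SimpleGraph V} {u : V}

theorem reachable_iff_of_adj_iff (h : ∀ a b, G.Reachable a u → (G.Adj a b ↔ H.Adj a b))
    (v : V) : G.Reachable v u ↔ H.Reachable v u := by
  constructor
  · rintro ⟨w⟩
    induction w with
    | nil => rfl
    | cons hab p ih => exact ((h _ _ ⟨.cons hab p⟩).1 hab).reachable.trans (ih h)
  · rintro ⟨w⟩
    induction w with
    | nil => rfl
    | cons hab p ih => exact ((h _ _ (ih h)).2 hab.symm).symm.reachable.trans (ih h)

end SimpleGraph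

namespace ProbabilityTheory

theorem integral_mul_eq_mul_integral_of_dependsOn {ι : Type*} [Finite ι] {β : ι → Type*}
    [∀ i, MeasurableSpace (β i)] [∀ i, MeasurableSingletonClass (β i)]
    [∀ i, Countable (β i)]
    {P : Measure (Π i, β i)} (hP : iIndepFun (fun i ω => ω i) P) {s t : Set ι}
    (hst : Disjoint s t) {f g : (Π i, β i) → ℝ} (hf : DependsOn f s) (hg : DependsOn g t) :
    ∫ ω, f ω * g ω ∂P = (∫ ω, f ω ∂P) * ∫ ω, g ω ∂P := by
  rw [← s.toFinite.coe_toFinset] at hf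
  rw [← t.toFinite.coe_toFinset] at hg
  obtain ⟨F, rfl⟩ := dependsOn_iff_exists_comp.1 hf
  obtain ⟨G, rfl⟩ := dependsOn_iff_exists_comp.1 hg
  have hF : Measurable F := measurable_of_countable F
  have hG : Measurable G := measurable_of_countable G
  have hind := (hP.indepFun_finset _ _ (Set.Finite.disjoint_toFinset.2 hst)
    measurable_pi_apply).comp hF hG
  exact hind.integral_fun_mul_eq_mul_integral
    (hF.comp (measurable_pi_lambda _ fun i => measurable_pi_apply _)).aestronglyMeasurable
    (hG.comp (measurable_pi_lambda _ fun i => measurable_pi_apply _)).aestronglyMeasurable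

end ProbabilityTheory

theorem Set.natCast_ncard_setOf_eq_sum {α : Type*} [Fintype α] (p : α → Prop)
    [DecidablePred p] :
    (({x | p x}.ncard : ℕ) : ℝ) = ∑ x, if p x then 1 else 0 := by
  rw [Set.ncard_eq_toFinset_card', Set.toFinset_ofPred, Finset.natCast_card_filter]

namespace RandomGraph

open SimpleGraph

variable {V : Type*}

def edgeGraph (ω : Sym2 V → Bool) : SimpleGraph V :=
  SimpleGraph.fromRel fun a b => ω s(a, b) = true

def edgeGraphOutside (S : Set V) (ω : Sym2 V → Bool) : SimpleGraph V :=
  SimpleGraph.fromRel fun a b => ω s(a, b) = true ∧ a ∉ S ∧ b ∉ S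

def edgesMeeting (S : Set V) : Set (Sym2 V) := {e | ∃ x ∈ e, x ∈ S}

def cluster (ω : Sym2 V → Bool) (v : V) : Set V := {u | (edgeGraph ω).Reachable u v}

def clusterOutside (S : Set V) (ω : Sym2 V → Bool) (v : V) : Set V :=
  {u | (edgeGraphOutside S ω).Reachable u v}

variable {S : Set V} {ω ω' : Sym2 V → Bool} {a b i j : V}

@[simp]
theorem edgeGraph_adj : (edgeGraph ω).Adj a b ↔ a ≠ b ∧ ω s(a, b) = true := by
  simp [edgeGraph, Sym2.eq_swap]

@[simp]
theorem edgeGraphOutside_adj :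
    (edgeGraphOutside S ω).Adj a b ↔ a ≠ b ∧ ω s(a, b) = true ∧ a ∉ S ∧ b ∉ S := by
  simp only [edgeGraphOutside, fromRel_adj, Sym2.eq_swap (a := b)]
  tauto

theorem edgeGraphOutside_le : edgeGraphOutside S ω ≤ edgeGraph ω := fun _ _ h => by
  rw [edgeGraphOutside_adj] at h
  exact edgeGraph_adj.2 ⟨h.1, h.2.1⟩

theorem clusterOutside_subset : clusterOutside S ω j ⊆ cluster ω j :=
  fun _ hu => hu.mono edgeGraphOutside_le

theorem cluster_eq_of_eqOn (h : cluster ω i = S)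
    (hω : ∀ e ∈ edgesMeeting S, ω e = ω' e) : cluster ω' i = S := by
  rw [← h]
  ext v
  refine (reachable_iff_of_adj_iff (fun a b ha => ?_) v).symm
  have haS : a ∈ S := h ▸ ha
  simp [hω s(a, b) ⟨a, Sym2.mem_mk_left a b, haS⟩]

theorem dependsOn_cluster_eq (i : V) (S : Set V) :
    DependsOn (fun ω => cluster ω i = S) (edgesMeeting S) := fun _ _ h =>
  propext ⟨fun hω => cluster_eq_of_eqOn hω h,
    fun hω' => cluster_eq_of_eqOn hω' fun e he => (h e he).symm⟩

theorem cluster_eq_clusterOutside (h : cluster ω i = S) (hj : j ∉ S) :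
    cluster ω j = clusterOutside S ω j := by
  have hout : ∀ c, (edgeGraph ω).Reachable c j → c ∉ S := fun c hc hcS =>
    hj (h ▸ (hc.symm.trans (h ▸ hcS : c ∈ cluster ω i)))
  ext v
  refine reachable_iff_of_adj_iff (fun a b ha => ⟨fun hab => ?_, (edgeGraphOutside_le ·)⟩) v
  have hb := hout b (hab.symm.reachable.trans ha)
  rw [edgeGraph_adj] at hab
  exact edgeGraphOutside_adj.2 ⟨hab.1, hab.2, hout a ha, hb⟩

theorem dependsOn_clusterOutside (S : Set V) (v : V) :
    DependsOn (fun ω => clusterOutside S ω v) (edgesMeeting S)ᶜ := by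
  intro ω ω' h
  have : edgeGraphOutside S ω = edgeGraphOutside S ω' := by
    ext a b
    simp only [edgeGraphOutside_adj]
    refine and_congr_right fun _ => ⟨fun hab => ?_, fun hab => ?_⟩ <;>
    · have he := h s(a, b) (by
        rintro ⟨x, hx, hxS⟩
        rcases Sym2.mem_iff.1 hx with rfl | rfl
        exacts [hab.2.1 hxS, hab.2.2 hxS])
      simp_all
  simp only [clusterOutside, this]

noncomputable def bigClusterInd (k : ℕ) (v : V) (ω : Sym2 V → Bool) : ℝ :=
  if k ≤ (cluster ω v).ncard then 1 else 0

theorem bigClusterInd_nonneg (k : ℕ) (v : V) (ω : Sym2 V → Bool) :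
    0 ≤ bigClusterInd k v ω := by
  unfold bigClusterInd; split_ifs <;> norm_num

theorem bigClusterInd_le_one (k : ℕ) (v : V) (ω : Sym2 V → Bool) :
    bigClusterInd k v ω ≤ 1 := by
  unfold bigClusterInd; split_ifs <;> norm_num

section Probability

variable [Fintype V] {P : Measure (Sym2 V → Bool)}

open scoped Classical

theorem integral_ite_cluster_eq_mul_le (hP : iIndepFun (fun e ω => ω e) P) (k : ℕ)
    (hj : j ∉ S) :
    ∫ ω, (if cluster ω i = S then 1 else 0) * bigClusterInd k j ω ∂P
      ≤ (∫ ω, (if cluster ω i = S then 1 else 0 : ℝ) ∂P)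
        * ∫ ω, bigClusterInd k j ω ∂P := by
  have := hP.isProbabilityMeasure
  set Y : (Sym2 V → Bool) → ℝ :=
    fun ω => if k ≤ (clusterOutside S ω j).ncard then 1 else 0
  have hXY : ∀ ω, (if cluster ω i = S then 1 else 0) * bigClusterInd k j ω
      = (if cluster ω i = S then 1 else 0) * Y ω := by
    intro ω
    by_cases h : cluster ω i = S
    · simp [h, bigClusterInd, Y, cluster_eq_clusterOutside h hj]
    · simp [h]
  have hY : ∫ ω, Y ω ∂P ≤ ∫ ω, bigClusterInd k j ω ∂P := by
    refine integral_mono .of_finite .of_finite fun ω => ?_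
    have := Set.ncard_le_ncard (clusterOutside_subset (S := S) (ω := ω) (j := j))
    unfold Y bigClusterInd
    split_ifs <;> norm_num
    omega
  calc _ = ∫ ω, (if cluster ω i = S then 1 else 0) * Y ω ∂P := by simp_rw [hXY]
    _ = (∫ ω, (if cluster ω i = S then 1 else 0 : ℝ) ∂P) * ∫ ω, Y ω ∂P :=
      integral_mul_eq_mul_integral_of_dependsOn hP
        (s := edgesMeeting S) disjoint_compl_right
        (fun _ _ h => by simp only [dependsOn_cluster_eq i S h])
        (fun _ _ h => by simp only [Y, dependsOn_clusterOutside S j h])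
    _ ≤ _ := mul_le_mul_of_nonneg_left hY (integral_nonneg fun ω => by positivity)

theorem sum_ite_cluster_eq (k : ℕ) (i j : V) (ω : Sym2 V → Bool) :
    ∑ S ∈ Finset.univ.filter (fun S : Set V => j ∉ S ∧ k ≤ S.ncard),
        (if cluster ω i = S then (1 : ℝ) else 0)
      = if (edgeGraph ω).Reachable i j then 0 else bigClusterInd k i ω := by
  rw [Finset.sum_ite_eq]
  by_cases hij : (edgeGraph ω).Reachable i j
  · simp [hij, cluster, hij.symm]
  · simp [hij, cluster, bigClusterInd, reachable_comm]

theorem covariance_bigClusterInd_le (hP : iIndepFun (fun e ω => ω e) P) (k : ℕ) (i j : V) :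
    cov[bigClusterInd k i, bigClusterInd k j; P]
      ≤ ∫ ω, (if (edgeGraph ω).Reachable i j then 1 else 0) * bigClusterInd k j ω ∂P := by
  have := hP.isProbabilityMeasure
  rw [covariance_eq_sub .of_discrete .of_discrete]
  set X := bigClusterInd (V := V) k
  set R : (Sym2 V → Bool) → ℝ := fun ω => if (edgeGraph ω).Reachable i j then 1 else 0
  set T : Finset (Set V) := Finset.univ.filter fun S => j ∉ S ∧ k ≤ S.ncard
  have hmul : ∀ ω, X i ω * X j ω
      ≤ R ω * X j ω + ∑ S ∈ T, (if cluster ω i = S then (1 : ℝ) else 0) * X j ω := by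
    intro ω
    rw [← Finset.sum_mul, sum_ite_cluster_eq]
    by_cases hij : (edgeGraph ω).Reachable i j
    · simpa [R, hij] using
        mul_le_of_le_one_left (bigClusterInd_nonneg k j ω) (bigClusterInd_le_one k i ω)
    · simp [R, hij, X]
  have hT : ∀ ω, ∑ S ∈ T, (if cluster ω i = S then (1 : ℝ) else 0) ≤ X i ω := by
    intro ω
    rw [sum_ite_cluster_eq]
    split_ifs
    exacts [bigClusterInd_nonneg k i ω, le_rfl]
  suffices ∫ ω, X i ω * X j ω ∂P
      ≤ ∫ ω, R ω * X j ω ∂P + (∫ ω, X i ω ∂P) * ∫ ω, X j ω ∂P by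
    simp only [Pi.mul_apply]
    linarith
  calc ∫ ω, X i ω * X j ω ∂P
      ≤ ∫ ω, R ω * X j ω ∂P
        + ∑ S ∈ T, ∫ ω, (if cluster ω i = S then 1 else 0) * X j ω ∂P := by
        rw [← integral_finsetSum _ fun _ _ => .of_finite, ← integral_add .of_finite .of_finite]
        exact integral_mono .of_finite .of_finite hmul
    _ ≤ ∫ ω, R ω * X j ω ∂P
        + ∑ S ∈ T, (∫ ω, (if cluster ω i = S then 1 else 0 : ℝ) ∂P)
          * ∫ ω, X j ω ∂P := by
        gcongr with S hS
        exact integral_ite_cluster_eq_mul_le hP k (Finset.mem_filter.1 hS).2.1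
    _ = ∫ ω, R ω * X j ω ∂P
        + (∫ ω, ∑ S ∈ T, (if cluster ω i = S then 1 else 0 : ℝ) ∂P)
          * ∫ ω, X j ω ∂P := by
        rw [integral_finsetSum _ fun _ _ => .of_finite, Finset.sum_mul]
    _ ≤ _ := by
        gcongr
        exacts [integral_nonneg (bigClusterInd_nonneg k j), .of_finite, .of_finite, hT]

theorem variance_sum_bigClusterInd_le (hP : iIndepFun (fun e ω => ω e) P) (k : ℕ) :
    Var[fun ω => ∑ v, bigClusterInd k v ω; P]
      ≤ ∑ v, ∫ ω, ((cluster ω v).ncard : ℝ) * bigClusterInd k v ω ∂P := by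
  have := hP.isProbabilityMeasure
  rw [variance_fun_sum fun _ => .of_discrete]
  calc ∑ i, ∑ j, cov[bigClusterInd k i, bigClusterInd k j; P]
      ≤ ∑ i, ∑ j,
          ∫ ω, (if (edgeGraph ω).Reachable i j then 1 else 0) * bigClusterInd k j ω ∂P := by
        gcongr with i _ j _
        exact covariance_bigClusterInd_le hP k i j
    _ = ∑ j, ∫ ω, ∑ i,
          (if (edgeGraph ω).Reachable i j then 1 else 0) * bigClusterInd k j ω ∂P := by
        rw [Finset.sum_comm]
        simp_rw [integral_finsetSum _ fun _ _ => Integrable.of_finite]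
    _ = _ := by
        simp_rw [← Finset.sum_mul, cluster, Set.natCast_ncard_setOf_eq_sum]

end Probability

end RandomGraph

open RandomGraph in
/-- for an inhomogeneous random graph with independent edges
(edge `e` present with probability `p e`), the variance of
`Z_{≥k} = Σ_v 1{|C(v)| ≥ k}` is at most `n·E[|C(V_n)| 1{|C(V_n)| ≥ k}]`. -/
theorem stmt_8 (n : ℕ)
    (p : Sym2 (Fin n) → ℝ≥0∞) (hp : ∀ e, p e ≤ 1) (k : ℕ)
    (P : Measure (Sym2 (Fin n) → Bool))
    (hP : P = Measure.pi (fun e => (PMF.bernoulli (p e).toNNReal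
        (by simpa using ENNReal.toNNReal_mono ENNReal.one_ne_top (hp e))).toMeasure)) :
    variance (fun ω =>
        ({v : Fin n | k ≤ {u | (SimpleGraph.fromRel
            (fun a b => ω s(a, b) = true)).Reachable u v}.ncard}.ncard : ℝ)) P
      ≤ (n : ℝ) * ((n : ℝ)⁻¹ * ∑ v : Fin n, ∫ ω,
          (({u | (SimpleGraph.fromRel
              (fun a b => ω s(a, b) = true)).Reachable u v}.ncard : ℝ) *
            (if k ≤ {u | (SimpleGraph.fromRel
              (fun a b => ω s(a, b) = true)).Reachable u v}.ncard then 1 else 0)) ∂P) := by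
  have hind : iIndepFun (fun e ω => ω e) P := hP ▸ iIndepFun_pi fun _ => aemeasurable_id
  calc _ = Var[fun ω => ∑ v, bigClusterInd k v ω; P] := by
        congr with ω
        exact Set.natCast_ncard_setOf_eq_sum _
    _ ≤ ∑ v, ∫ ω, ((cluster ω v).ncard : ℝ) * bigClusterInd k v ω ∂P :=
        variance_sum_bigClusterInd_le hind k
    _ = _ := by
        obtain rfl | hn := eq_or_ne n 0
        · simp
        · exact (mul_inv_cancel_left₀ (Nat.cast_ne_zero.2 hn) _).symm
end

section
/- (Otter–Dwass formula) Let (X_i)_{i≥1} be i.i.d. nonnegative-integer-valued random variables and let T denote the total progeny of a Galton–Watson branching process with offspring distribution X_1 started from m ≥ 1 initial individuals. Then for all k ≥ 1, P(T = k) = (m/k) P(X_1 + ⋯ + X_k = k - m). -/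
open MeasureTheory ProbabilityTheory Set Filter
open scoped ENNReal

/-!
The law of `(X_0, …, X_{k-1})` is a product measure, hence invariant under the `k` cyclic
rotations of the vector; so `k · P(T = k)` is the expected number of rotations whose walk first
hits `0` at time `k`. By the cycle lemma this number is `m` when `X_0 + ⋯ + X_{k-1} = k - m` and
`0` otherwise.

For the cycle lemma, extend the increments periodically: the partial sums `W` then go down by at
most `1` per step and by exactly `m` per period. A rotation `r` avoids level `W r - m` during
`k` steps iff `W (r + k)` is a strict minimum of `W` on `[r, r + k]`, and `r ↦ W (r + k)` maps
these rotations bijectively onto the `m` levels just below `min_{s < k} W s`.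
-/

open Finset

theorem measurePreserving_comp_equiv {ι β : Type*} [Fintype ι] [MeasurableSpace β]
    (ν : Measure β) [SigmaFinite ν] (e : ι ≃ ι) :
    MeasurePreserving (fun z : ι → β ↦ z ∘ e) (Measure.pi fun _ ↦ ν) (Measure.pi fun _ ↦ ν) := by
  convert measurePreserving_piCongrLeft (fun _ : ι ↦ ν) e.symm using 1
  ext z i
  rw [MeasurableEquiv.coe_piCongrLeft, Equiv.piCongrLeft_apply_eq_cast]
  simp

open Classical in
theorem sum_measure_eq_mul_of_card {β ι : Type*} [MeasurableSpace β] (μ : Measure β)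
    (s : Finset ι) {A : ι → Set β} {S : Set β} (hA : ∀ i, MeasurableSet (A i))
    (hS : MeasurableSet S) (hAS : ∀ i ∈ s, A i ⊆ S) (c : ℕ)
    (hcard : ∀ x ∈ S, #{i ∈ s | x ∈ A i} = c) :
    ∑ i ∈ s, μ (A i) = c * μ S := by
  have hpoint (x : β) : ∑ i ∈ s, (A i).indicator 1 x = c * S.indicator (1 : β → ℝ≥0∞) x := by
    by_cases hx : x ∈ S
    · rw [← hcard x hx, card_filter, indicator_of_mem hx, Pi.one_apply, mul_one]
      push_cast [Set.indicator_apply]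
      rfl
    · rw [indicator_of_notMem hx, mul_zero]
      exact sum_eq_zero fun i hi ↦ indicator_of_notMem (fun h ↦ hx (hAS i hi h)) _
  calc ∑ i ∈ s, μ (A i) = ∑ i ∈ s, ∫⁻ x, (A i).indicator 1 x ∂μ := by
        simp only [lintegral_indicator_one (hA _)]
    _ = ∫⁻ x, ∑ i ∈ s, (A i).indicator 1 x ∂μ :=
        (lintegral_finsetSum _ fun i _ ↦ measurable_one.indicator (hA i)).symm
    _ = c * μ S := by
        simp_rw [hpoint]
        rw [lintegral_const_mul _ (measurable_one.indicator hS), lintegral_indicator_one hS]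

section SkipFree

variable {W : ℕ → ℤ}

theorem exists_firstHit_of_skipFree (hW : ∀ n, W n - 1 ≤ W (n + 1)) {v : ℤ} (hv : v < W 0)
    {N : ℕ} (hN : W N ≤ v) : ∃ n, W n = v ∧ ∀ s < n, v < W s := by
  classical
  have hex : ∃ n, W n ≤ v := ⟨N, hN⟩
  refine ⟨Nat.find hex, le_antisymm (Nat.find_spec hex) ?_,
    fun s hs ↦ not_le.1 (Nat.find_min hex hs)⟩
  obtain ⟨j, hj⟩ : ∃ j, Nat.find hex = j + 1 :=
    Nat.exists_eq_succ_of_ne_zero fun h ↦ hv.not_ge (h ▸ Nat.find_spec hex)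
  have hj' : v < W j := not_le.1 (Nat.find_min hex (by omega))
  rw [hj]
  linarith [hW j]

variable {k m : ℕ} (hW : ∀ n, W n - 1 ≤ W (n + 1)) (hdrift : ∀ n, W (n + k) = W n - m)
include hW hdrift

theorem add_period_lt_of_forall_ne (hm : 1 ≤ m) {r : ℕ}
    (hr : ∀ t, 1 ≤ t → t < k → W (r + t) ≠ W r - m) {s : ℕ} (hrs : r ≤ s) (hs : s < r + k) :
    W (r + k) < W s := by
  by_contra! h
  obtain ⟨n, hn, hfirst⟩ := exists_firstHit_of_skipFree (W := fun i ↦ W (r + i))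
    (fun i ↦ hW (r + i)) (v := W r - m) (N := s - r) (by simp only [add_zero]; omega)
    (by simp only [Nat.add_sub_cancel' hrs]; linarith [hdrift r])
  have hns : n ≤ s - r := by
    by_contra! hlt
    have := hfirst _ hlt
    simp only [Nat.add_sub_cancel' hrs] at this
    linarith [hdrift r]
  have hn0 : n ≠ 0 := by
    rintro rfl
    simp only [add_zero] at hn
    omega
  exact hr n (by omega) (by omega) hn

theorem mem_Ico_of_forall_ne (hm : 1 ≤ m) {s₀ : ℕ} (hs₀ : s₀ < k)
    (hmin : ∀ s < k, W s₀ ≤ W s) {r : ℕ} (hrk : r < k)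
    (hr : ∀ t, 1 ≤ t → t < k → W (r + t) ≠ W r - m) :
    W s₀ - m ≤ W (r + k) ∧ W (r + k) < W s₀ := by
  refine ⟨by linarith [hdrift r, hmin r hrk], ?_⟩
  rcases le_or_gt r s₀ with h | h
  · exact add_period_lt_of_forall_ne hW hdrift hm hr h (by omega)
  · have := add_period_lt_of_forall_ne hW hdrift hm hr (s := s₀ + k) (by omega) (by omega)
    linarith [hdrift s₀]

theorem exists_forall_ne_of_mem_Ico {s₀ : ℕ} (hs₀ : s₀ < k) (hmin : ∀ s < k, W s₀ ≤ W s)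
    {v : ℤ} (hv : W s₀ - m ≤ v) (hv' : v < W s₀) :
    ∃ r < k, (∀ t, 1 ≤ t → t < k → W (r + t) ≠ W r - m) ∧ W (r + k) = v := by
  obtain ⟨n, hn, hfirst⟩ := exists_firstHit_of_skipFree hW (v := v) (N := s₀ + k)
    (by linarith [hmin 0 (by omega)]) (by linarith [hdrift s₀])
  have hkn : k ≤ n := by
    by_contra! h
    linarith [hmin n h]
  have hns : n ≤ s₀ + k := by
    by_contra! h
    linarith [hfirst _ h, hdrift s₀]
  have hperiod := hdrift (n - k)
  rw [Nat.sub_add_cancel hkn] at hperiod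
  refine ⟨n - k, by omega, fun t ht1 ht2 h ↦ ?_, by rwa [Nat.sub_add_cancel hkn]⟩
  linarith [hfirst (n - k + t) (by omega)]

open Classical in
theorem card_filter_forall_ne (hk : 1 ≤ k) (hm : 1 ≤ m) :
    #{r ∈ range k | ∀ t, 1 ≤ t → t < k → W (r + t) ≠ W r - m} = m := by
  obtain ⟨s₀, hs₀, hmin⟩ := (range k).exists_min_image W (nonempty_range_iff.2 (by omega))
  simp only [Finset.mem_range] at hs₀ hmin
  calc _ = #(Icc (W s₀ - m) (W s₀ - 1)) := by
        refine card_nbij (fun r ↦ W (r + k)) (fun r hr ↦ ?_) (fun r hr r' hr' h ↦ ?_)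
          (fun v hv ↦ ?_)
        · simp only [mem_coe, mem_filter, Finset.mem_range, coe_Icc, Set.mem_Icc] at hr ⊢
          have := mem_Ico_of_forall_ne hW hdrift hm hs₀ hmin hr.1 hr.2
          omega
        · simp only [mem_coe, mem_filter, Finset.mem_range] at hr hr' h
          by_contra hne
          rcases Nat.lt_or_gt_of_ne hne with hlt | hlt
          · linarith [add_period_lt_of_forall_ne hW hdrift hm hr'.2 (s := r + k) (by omega)
              (by omega)]
          · linarith [add_period_lt_of_forall_ne hW hdrift hm hr.2 (s := r' + k) (by omega)
              (by omega)]
        · simp only [coe_Icc, Set.mem_Icc] at hv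
          obtain ⟨r, hrk, hr, rfl⟩ :=
            exists_forall_ne_of_mem_Ico hW hdrift hs₀ hmin hv.1 (by omega)
          refine ⟨r, ?_, rfl⟩
          simp only [mem_coe, mem_filter, Finset.mem_range]
          exact ⟨hrk, hr⟩
    _ = m := by simp

end SkipFree

def lukasiewiczPath (a : ℕ → ℕ) (n : ℕ) : ℤ := ∑ i ∈ range n, ((a i : ℤ) - 1)

def FirstZeroAt (m : ℕ) (a : ℕ → ℕ) (k : ℕ) : Prop :=
  m + lukasiewiczPath a k = 0 ∧ ∀ t, 1 ≤ t → t < k → m + lukasiewiczPath a t ≠ 0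

section LukasiewiczPath

variable {a b : ℕ → ℕ} {k m : ℕ}

theorem lukasiewiczPath_add (a : ℕ → ℕ) (r t : ℕ) :
    lukasiewiczPath a (r + t) = lukasiewiczPath a r + lukasiewiczPath (fun i ↦ a (r + i)) t :=
  sum_range_add _ _ _

theorem lukasiewiczPath_sub_one_le (a : ℕ → ℕ) (n : ℕ) :
    lukasiewiczPath a n - 1 ≤ lukasiewiczPath a (n + 1) := by
  rw [lukasiewiczPath, lukasiewiczPath, sum_range_succ]
  linarith [(a n).cast_nonneg (α := ℤ)]

theorem lukasiewiczPath_add_period (hper : ∀ n, a (n + k) = a n)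
    (hperiod : lukasiewiczPath a k = -m) (n : ℕ) :
    lukasiewiczPath a (n + k) = lukasiewiczPath a n - m := by
  rw [add_comm, lukasiewiczPath_add, hperiod]
  simp_rw [add_comm k, hper]
  ring

theorem firstZeroAt_congr (h : ∀ i < k, a i = b i) :
    FirstZeroAt m a k ↔ FirstZeroAt m b k := by
  have hpath : ∀ t ≤ k, lukasiewiczPath a t = lukasiewiczPath b t := fun t ht ↦
    sum_congr rfl fun i hi ↦ by rw [h i (by simp at hi; omega)]
  simp +contextual [FirstZeroAt, hpath, le_of_lt]

end LukasiewiczPath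

section Rotation

open scoped Fin.NatCast

-- The cast `(n : Fin k)` reduces `n` modulo `k`, so `fun n : ℕ ↦ y (c + (n : Fin k))` is the
-- periodic extension of the `c`-th cyclic rotation of `y`.
variable {k m : ℕ} [NeZero k]

theorem sum_range_rotate (y : Fin k → ℕ) (c : Fin k) :
    ∑ n ∈ range k, (y (c + (n : Fin k)) : ℤ) = ∑ i, (y i : ℤ) := by
  rw [← Fin.sum_univ_eq_sum_range (fun n ↦ (y (c + (n : Fin k)) : ℤ))]
  simp only [Fin.cast_val_eq_self]
  exact Equiv.sum_comp (Equiv.addLeft c) (fun i ↦ (y i : ℤ))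

theorem lukasiewiczPath_rotate (y : Fin k → ℕ) (c : Fin k) :
    lukasiewiczPath (fun n : ℕ ↦ y (c + (n : Fin k))) k = ∑ i, (y i : ℤ) - k := by
  rw [lukasiewiczPath, sum_sub_distrib, sum_range_rotate]
  simp

theorem sum_eq_of_firstZeroAt_rotate {y : Fin k → ℕ} {c : Fin k}
    (h : FirstZeroAt m (fun n : ℕ ↦ y (c + (n : Fin k))) k) : ∑ i, (y i : ℤ) = k - m := by
  linarith [h.1, lukasiewiczPath_rotate y c]

open Classical in
theorem card_firstZeroAt_rotate (hm : 1 ≤ m) {y : Fin k → ℕ} (hy : ∑ i, (y i : ℤ) = k - m) :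
    #{c : Fin k | FirstZeroAt m (fun n : ℕ ↦ y (c + (n : Fin k))) k} = m := by
  set a : ℕ → ℕ := fun n ↦ y n
  have hrot (c : Fin k) : (fun n : ℕ ↦ y (c + (n : Fin k))) = fun n ↦ a (c + n) := by
    ext n
    simp [a]
  have hper (n : ℕ) : a (n + k) = a n := by simp [a]
  have hperiod : lukasiewiczPath a k = -m := by
    have := lukasiewiczPath_rotate y 0
    simp only [zero_add] at this
    rw [this, hy]
    ring
  have hdrift := lukasiewiczPath_add_period hper hperiod
  have hgood (r : ℕ) : FirstZeroAt m (fun n ↦ a (r + n)) k ↔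
      ∀ t, 1 ≤ t → t < k → lukasiewiczPath a (r + t) ≠ lukasiewiczPath a r - m := by
    have hshift (t : ℕ) : lukasiewiczPath (fun n ↦ a (r + n)) t =
        lukasiewiczPath a (r + t) - lukasiewiczPath a r := by
      rw [lukasiewiczPath_add]
      ring
    simp only [FirstZeroAt, hshift, hdrift]
    constructor
    · rintro ⟨-, h⟩ t ht1 ht2 heq
      exact h t ht1 ht2 (by omega)
    · exact fun h ↦ ⟨by ring, fun t ht1 ht2 heq ↦ h t ht1 ht2 (by omega)⟩
  calc #{c : Fin k | FirstZeroAt m (fun n : ℕ ↦ y (c + (n : Fin k))) k}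
      = #{r ∈ range k | ∀ t, 1 ≤ t → t < k →
          lukasiewiczPath a (r + t) ≠ lukasiewiczPath a r - m} := by
        simp only [hrot, hgood, card_filter, ← Fin.sum_univ_eq_sum_range]
        congr!
    _ = m := card_filter_forall_ne (lukasiewiczPath_sub_one_le a) hdrift NeZero.one_le hm

theorem pi_setOf_firstZeroAt (ν : Measure ℕ) [SigmaFinite ν] (hm : 1 ≤ m) :
    Measure.pi (fun _ : Fin k ↦ ν) {z | FirstZeroAt m (fun n : ℕ ↦ z (n : Fin k)) k} =
      m / k * Measure.pi (fun _ : Fin k ↦ ν) {z | ∑ i, (z i : ℤ) = k - m} := by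
  set μ := Measure.pi fun _ : Fin k ↦ ν
  set A := {z : Fin k → ℕ | FirstZeroAt m (fun n : ℕ ↦ z (n : Fin k)) k}
  have hrot (c : Fin k) : μ ((· ∘ Equiv.addLeft c) ⁻¹' A) = μ A :=
    (measurePreserving_comp_equiv ν (Equiv.addLeft c)).measure_preimage
      MeasurableSet.of_discrete.nullMeasurableSet
  have hcount := sum_measure_eq_mul_of_card μ (univ : Finset (Fin k))
    (A := fun c ↦ (· ∘ Equiv.addLeft c) ⁻¹' A) (fun _ ↦ .of_discrete) .of_discrete
    (fun c _ y hy ↦ sum_eq_of_firstZeroAt_rotate hy) m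
    (fun y hy ↦ card_firstZeroAt_rotate hm hy)
  simp only [hrot, sum_const, card_univ, Fintype.card_fin, nsmul_eq_mul] at hcount
  rw [← ENNReal.mul_div_right_comm, ENNReal.eq_div_iff (by simp [NeZero.ne k]) (by simp)]
  exact hcount

end Rotation

open scoped Fin.NatCast in
/-- Otter–Dwass formula: for the random walk
`S_t = m + Σ_{i<t} (X_i - 1)` with i.i.d. offspring `X_i`, the total progeny
`T = inf{t ≥ 1 : S_t = 0}` of a Galton–Watson process started from `m`
individuals satisfies `P(T = k) = (m/k) P(X_1 + ⋯ + X_k = k - m)`. -/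
theorem stmt_10 {Ω : Type*} [MeasurableSpace Ω] (P : Measure Ω)
    [IsProbabilityMeasure P]
    (X : ℕ → Ω → ℕ) (hmeas : ∀ i, Measurable (X i))
    (hindep : iIndepFun X P)
    (hident : ∀ i, IdentDistrib (X i) (X 0) P P)
    (m : ℕ) (hm : 1 ≤ m) (k : ℕ) (hk : 1 ≤ k) :
    P {ω | ((m:ℤ) + ∑ i ∈ Finset.range k, ((X i ω : ℤ) - 1) = 0) ∧
           ∀ t, 1 ≤ t → t < k →
             (m:ℤ) + ∑ i ∈ Finset.range t, ((X i ω : ℤ) - 1) ≠ 0}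
      = ((m : ℝ≥0∞) / k) *
          P {ω | (∑ i ∈ Finset.range k, (X i ω : ℤ)) = (k:ℤ) - m} := by
  have : NeZero k := ⟨by omega⟩
  set V : Ω → Fin k → ℕ := fun ω i ↦ X i ω
  have hV : AEMeasurable V P := (measurable_pi_lambda V fun i ↦ hmeas i).aemeasurable
  have hlaw : P.map V = Measure.pi fun _ ↦ P.map (X 0) := by
    rw [(hindep.precomp Fin.val_injective).map_fun_eq_pi_map
      fun i : Fin k ↦ (hmeas i).aemeasurable]
    simp_rw [(hident _).map_eq]
  have hfirst : {ω | FirstZeroAt m (X · ω) k} =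
      V ⁻¹' {z | FirstZeroAt m (fun n : ℕ ↦ z (n : Fin k)) k} := by
    ext ω
    exact firstZeroAt_congr fun i hi ↦ by simp [V, Fin.val_cast_of_lt hi]
  have hsum : {ω | ∑ i ∈ range k, (X i ω : ℤ) = k - m} =
      V ⁻¹' {z | ∑ i, (z i : ℤ) = k - m} := by
    ext ω
    simp [V, Fin.sum_univ_eq_sum_range (fun n ↦ (X n ω : ℤ))]
  have := Measure.isProbabilityMeasure_map (μ := P) (hmeas 0).aemeasurable
  change P {ω | FirstZeroAt m (X · ω) k} = _
  rw [hfirst, hsum, ← Measure.map_apply_of_aemeasurable hV .of_discrete,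
    ← Measure.map_apply_of_aemeasurable hV .of_discrete, hlaw]
  exact pi_setOf_firstZeroAt _ hm
end

section
/- Let ρ_n be the survival probability of a Galton–Watson process with Poi(W_n*) offspring, where ε_n = E[W_n*] - 1 ≥ 0. Then ρ_n · E[(W_n*)^2 · 1{ρ_n W_n* ≤ 1/2}] ≤ 4 ε_n. In particular, if E[(W_n*)^2] is bounded below by a constant c̃ > 0 uniformly (as when sup_n E[(W_n*)^2·1{ρ_nW_n*≤1/2}] ≥ c̃), then ρ_n ≤ (4/c̃) ε_n. -/
/-!
Expanding the fixed-point equation `1 - ρ = E[exp(-ρW)]` against the lower bounds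
`exp(-x) ≥ 1 - x` everywhere and `exp(-x) ≥ 1 - x + x²/4` for `x ≤ 1/2` gives
`1 - ρ ≥ 1 - ρ E[W] + (ρ²/4) E[W² 1{ρW ≤ 1/2}]`, i.e. `(ρ²/4) E[W² 1{ρW ≤ 1/2}] ≤ ρ ε`;
dividing by `ρ` gives the bound.
-/

open MeasureTheory Set Filter

lemma Real.one_sub_add_sq_div_four_le_exp_neg {x : ℝ} (hx : x ≤ 2) :
    1 - x + x ^ 2 / 4 ≤ Real.exp (-x) :=
  calc 1 - x + x ^ 2 / 4 = (-x / 2 + 1) ^ 2 := by ring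
    _ ≤ Real.exp (-x / 2) ^ 2 := by gcongr; linarith; exact Real.add_one_le_exp _
    _ = Real.exp (-x) := by rw [← Real.exp_nat_mul]; ring_nf

lemma one_sub_add_indicator_le_exp_neg (x : ℝ) :
    1 - x + {y : ℝ | y ≤ 1 / 2}.indicator (fun y => y ^ 2 / 4) x ≤ Real.exp (-x) := by
  by_cases hx : x ≤ 1 / 2
  · rw [indicator_of_mem (show x ∈ {y : ℝ | y ≤ 1 / 2} from hx)]
    exact Real.one_sub_add_sq_div_four_le_exp_neg (by linarith)
  · rw [indicator_of_notMem (show x ∉ {y : ℝ | y ≤ 1 / 2} from hx)]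
    linarith [Real.add_one_le_exp (-x)]

lemma integrable_indicator_sq_div_four_comp_mul {μ : Measure ℝ} [IsFiniteMeasure μ]
    (hnonneg : ∀ᵐ w ∂μ, 0 ≤ w) {ρ : ℝ} (hρ : 0 ≤ ρ) :
    Integrable (fun w => {y : ℝ | y ≤ 1 / 2}.indicator (fun y => y ^ 2 / 4) (ρ * w)) μ := by
  have hS : MeasurableSet {y : ℝ | y ≤ 1 / 2} := measurableSet_le measurable_id measurable_const
  refine Integrable.mono' (integrable_const (1 / 16 : ℝ))
    (((measurable_id.pow_const 2).div_const 4).indicator hS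
      |>.comp (measurable_const_mul ρ)).aestronglyMeasurable ?_
  filter_upwards [hnonneg] with w hw
  have hρw : 0 ≤ ρ * w := mul_nonneg hρ hw
  by_cases hwS : ρ * w ∈ {y : ℝ | y ≤ 1 / 2}
  · rw [indicator_of_mem hwS, Real.norm_of_nonneg (by positivity)]
    nlinarith [show ρ * w ≤ 1 / 2 from hwS]
  · rw [indicator_of_notMem hwS, norm_zero]
    norm_num

lemma one_sub_mul_integral_add_le_integral_exp_neg_mul {μ : Measure ℝ} [IsProbabilityMeasure μ]
    (hnonneg : ∀ᵐ w ∂μ, 0 ≤ w) (hint : Integrable id μ) {ρ : ℝ} (hρ : 0 ≤ ρ) :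
    1 - ρ * ∫ w, w ∂μ + ρ ^ 2 / 4 * ∫ w in {w : ℝ | ρ * w ≤ 1 / 2}, w ^ 2 ∂μ
      ≤ ∫ w, Real.exp (-(ρ * w)) ∂μ := by
  set S : Set ℝ := {y : ℝ | y ≤ 1 / 2}
  have hS : MeasurableSet S := measurableSet_le measurable_id measurable_const
  have hquad := integrable_indicator_sq_div_four_comp_mul hnonneg hρ
  have hexp : Integrable (fun w => Real.exp (-(ρ * w))) μ := by
    refine Integrable.mono' (integrable_const 1) (by fun_prop) ?_
    filter_upwards [hnonneg] with w hw
    rw [Real.norm_of_nonneg (Real.exp_pos _).le, Real.exp_le_one_iff]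
    exact neg_nonpos.mpr (mul_nonneg hρ hw)
  have hmul : Integrable (fun w => ρ * w) μ := hint.const_mul ρ
  have hlin : Integrable (fun w => 1 - ρ * w) μ := (integrable_const 1).sub hmul
  have hsplit : ∫ w, (1 - ρ * w + S.indicator (fun y => y ^ 2 / 4) (ρ * w)) ∂μ
      = 1 - ρ * ∫ w, w ∂μ + ρ ^ 2 / 4 * ∫ w in {w : ℝ | ρ * w ≤ 1 / 2}, w ^ 2 ∂μ := by
    have hpre : MeasurableSet {w : ℝ | ρ * w ≤ 1 / 2} := hS.preimage (measurable_const_mul ρ)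
    have hquad_eq : ∫ w, S.indicator (fun y => y ^ 2 / 4) (ρ * w) ∂μ
        = ρ ^ 2 / 4 * ∫ w in {w : ℝ | ρ * w ≤ 1 / 2}, w ^ 2 ∂μ := by
      rw [← integral_const_mul, ← integral_indicator hpre]
      congr 1 with w
      simp only [indicator_apply, S, mem_ofPred_eq]
      split_ifs <;> ring
    rw [integral_add hlin hquad, integral_sub (integrable_const 1) hmul, integral_const_mul,
      hquad_eq, integral_const, probReal_univ, smul_eq_mul, mul_one]
  rw [← hsplit]
  exact integral_mono (hlin.add hquad) hexp fun w => one_sub_add_indicator_le_exp_neg (ρ * w)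

theorem stmt_12_general (μ : Measure ℝ) [IsProbabilityMeasure μ]
    (hsupp : μ (Set.Iio 0) = 0)
    (ε ρ : ℝ) (hε : 0 ≤ ε)
    (hint : Integrable id μ) (hmean : ∫ w, w ∂μ = 1 + ε)
    (hρ0 : 0 ≤ ρ)
    (hfix : 1 - ρ = ∫ w, Real.exp (-ρ * w) ∂μ) :
    ρ * ∫ w in {w : ℝ | ρ * w ≤ 1/2}, w ^ 2 ∂μ ≤ 4 * ε ∧
    ∀ c : ℝ, 0 < c → c ≤ ∫ w in {w : ℝ | ρ * w ≤ 1/2}, w ^ 2 ∂μ →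
      ρ ≤ (4 / c) * ε := by
  have hnonneg : ∀ᵐ w ∂μ, 0 ≤ w :=
    ae_iff.2 (measure_mono_null (fun _ hw => not_le.mp hw) hsupp)
  have hexpand := one_sub_mul_integral_add_le_integral_exp_neg_mul hnonneg hint hρ0
  rw [hmean, ← funext fun w => congrArg Real.exp (neg_mul ρ w), ← hfix] at hexpand
  set I := ∫ w in {w : ℝ | ρ * w ≤ 1 / 2}, w ^ 2 ∂μ
  have hmain : ρ * I ≤ 4 * ε := by
    rcases hρ0.eq_or_lt with rfl | hρ
    · simpa using hε
    · exact le_of_mul_le_mul_left (by linarith) hρ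
  refine ⟨hmain, fun c hc hcI => ?_⟩
  rw [div_mul_eq_mul_div, le_div_iff₀ hc]
  linarith [mul_le_mul_of_nonneg_left hcI hρ0]

/-- for a near-critical mixed Poisson branching process with
`E[Wₙ*] = 1 + εₙ`, the survival probability `ρₙ` satisfies
`ρₙ · E[(Wₙ*)² 1{ρₙWₙ* ≤ 1/2}] ≤ 4εₙ`; in particular, a uniform lower bound on
the truncated second moment yields `ρₙ ≤ (4/c̃) εₙ`. -/
theorem stmt_12 (μ : Measure ℝ) [IsProbabilityMeasure μ]
    (hsupp : μ (Set.Iio 0) = 0)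
    (ε ρ : ℝ) (hε : 0 ≤ ε)
    (hint : Integrable id μ) (hmean : ∫ w, w ∂μ = 1 + ε)
    (hρ0 : 0 ≤ ρ) (hρ1 : ρ ≤ 1)
    (hfix : 1 - ρ = ∫ w, Real.exp (-ρ * w) ∂μ) :
    ρ * ∫ w in {w : ℝ | ρ * w ≤ 1/2}, w ^ 2 ∂μ ≤ 4 * ε ∧
    ∀ c : ℝ, 0 < c → c ≤ ∫ w in {w : ℝ | ρ * w ≤ 1/2}, w ^ 2 ∂μ →
      ρ ≤ (4 / c) * ε :=
  stmt_12_general μ hsupp ε ρ hε hint hmean hρ0 hfix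
end

section
/- Let (T_l)_{l≥1} be i.i.d. nonnegative-integer-valued random variables such that P(T_1 ≥ k) ≤ K k^{-1/δ} for all k ≥ 1, where K > 0 and δ > 1, and let M be a nonnegative-integer-valued random variable independent of (T_l) with E[M] < ∞. Then there is a constant c_δ > 0 depending only on δ such that for all k ≥ 1, P(Σ_{l=1}^M T_l ≥ k) ≤ c_δ K E[M] k^{-1/δ}. -/
/-!
Truncating every summand at `k` does not change the event `k ≤ ∑_{l<M} T_l`: if one summand
is at least `k`, its truncation alone already equals `k`. Markov's inequality and Wald's identity
for the truncated sum give `k P(∑_{l<M} T_l ≥ k) ≤ E[M] E[min(T_0, k)] = E[M] ∑_{j<k} P(T_0 > j)`,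
and the tail bound turns the last sum into `K ∑_{j=1}^k j^{-a} ≤ K k^{1-a} / (1 - a)` with
`a = 1/δ`, by concavity of `x ↦ x^{1-a}`. So `c_δ = 1 / (1 - 1/δ)` works.
-/

open MeasureTheory ProbabilityTheory
open scoped ENNReal

theorem one_sub_mul_rpow_neg_le_sub {a : ℝ} (ha0 : 0 ≤ a) (ha1 : a ≤ 1) (j : ℕ) :
    (1 - a) * ((j : ℝ) + 1) ^ (-a) ≤ ((j : ℝ) + 1) ^ (1 - a) - (j : ℝ) ^ (1 - a) := by
  set x : ℝ := (j : ℝ) + 1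
  have hx : 0 < x := by positivity
  have hinv : x⁻¹ ≤ 1 := inv_le_one_of_one_le₀ (by simp [x])
  have hbern : (j : ℝ) ^ (1 - a) ≤ x ^ (1 - a) * (1 + (1 - a) * -x⁻¹) :=
    calc (j : ℝ) ^ (1 - a) = x ^ (1 - a) * (1 + -x⁻¹) ^ (1 - a) := by
          rw [← Real.mul_rpow hx.le (by linarith)]
          congr 1
          field_simp
          ring
      _ ≤ x ^ (1 - a) * (1 + (1 - a) * -x⁻¹) := by
          gcongr
          exact rpow_one_add_le_one_add_mul_self (by linarith) (by linarith) (by linarith)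
  have hxa : x ^ (-a) = x ^ (1 - a) * x⁻¹ := by
    rw [← Real.rpow_neg_one, ← Real.rpow_add hx]
    ring_nf
  rw [hxa]
  linear_combination hbern

theorem sum_range_add_one_rpow_neg_le {a : ℝ} (ha0 : 0 ≤ a) (ha1 : a < 1) (k : ℕ) :
    ∑ j ∈ Finset.range k, ((j : ℝ) + 1) ^ (-a) ≤ (k : ℝ) ^ (1 - a) / (1 - a) := by
  have h1a : 0 < 1 - a := by linarith
  rw [le_div_iff₀ h1a, Finset.sum_mul]
  calc ∑ j ∈ Finset.range k, ((j : ℝ) + 1) ^ (-a) * (1 - a)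
      ≤ ∑ j ∈ Finset.range k, (((j + 1 : ℕ) : ℝ) ^ (1 - a) - (j : ℝ) ^ (1 - a)) := by
        gcongr with j
        push_cast
        linarith [one_sub_mul_rpow_neg_le_sub ha0 ha1.le j]
    _ = (k : ℝ) ^ (1 - a) := by
        rw [Finset.sum_range_sub (fun j : ℕ => (j : ℝ) ^ (1 - a))]
        simp [Real.zero_rpow h1a.ne']

theorem le_sum_min_of_le_sum {ι : Type*} {s : Finset ι} {t : ι → ℕ} {k : ℕ}
    (h : k ≤ ∑ i ∈ s, t i) : k ≤ ∑ i ∈ s, min (t i) k :=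
  calc k = min (∑ i ∈ s, t i) k := (min_eq_right h).symm
    _ ≤ ∑ i ∈ s, min (t i) k :=
      Finset.le_sum_of_subadditive (fun n => min n k) (by simp) (fun _ _ => by omega) s t

theorem tsum_ite_lt_mul_eq_sum_range (n : ℕ) (x : ℕ → ℝ≥0∞) :
    ∑' l, (if l < n then 1 else 0) * x l = ∑ l ∈ Finset.range n, x l := by
  rw [tsum_eq_sum (s := Finset.range n) (fun l hl => by simp_all)]
  exact Finset.sum_congr rfl fun l hl => by simp_all

section RandomSum

variable {Ω : Type*} [MeasurableSpace Ω] {P : Measure Ω}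

theorem lintegral_ite_lt_eq_measure {M : Ω → ℕ} (hM : Measurable M) (l : ℕ) :
    ∫⁻ ω, (if l < M ω then 1 else 0) ∂P = P {ω | l < M ω} := by
  have hs : MeasurableSet {ω | l < M ω} := hM .of_discrete
  rw [← lintegral_indicator_one hs]
  simp [Set.indicator_apply]

theorem lintegral_natCast_eq_tsum_measure_lt {M : Ω → ℕ} (hM : Measurable M) :
    ∫⁻ ω, (M ω : ℝ≥0∞) ∂P = ∑' l, P {ω | l < M ω} := by
  have hs (l : ℕ) : MeasurableSet {ω | l < M ω} := hM .of_discrete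
  simp_rw [← lintegral_ite_lt_eq_measure hM]
  rw [← lintegral_tsum fun l => (measurable_const.ite (hs l) measurable_const).aemeasurable]
  congr 1 with ω
  simpa using (tsum_ite_lt_mul_eq_sum_range (M ω) 1).symm

theorem lintegral_min_natCast_eq_sum_measure_lt {X : Ω → ℕ} (hX : Measurable X) (k : ℕ) :
    ∫⁻ ω, ((min (X ω) k : ℕ) : ℝ≥0∞) ∂P = ∑ j ∈ Finset.range k, P {ω | j < X ω} := by
  rw [lintegral_natCast_eq_tsum_measure_lt (hX.min measurable_const),
    ← tsum_ite_lt_mul_eq_sum_range]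
  refine tsum_congr fun j => ?_
  by_cases hj : j < k <;> simp [hj]

theorem lintegral_sum_range_eq_mul {β : Type*} [MeasurableSpace β] {T : ℕ → Ω → β} {M : Ω → ℕ}
    {g : β → ℝ≥0∞} (hg : Measurable g) (hM : Measurable M)
    (hident : ∀ i, IdentDistrib (T i) (T 0) P P) (hMT : IndepFun M (fun ω i => T i ω) P) :
    ∫⁻ ω, ∑ l ∈ Finset.range (M ω), g (T l ω) ∂P
      = (∫⁻ ω, (M ω : ℝ≥0∞) ∂P) * ∫⁻ ω, g (T 0 ω) ∂P := by
  have hind (l : ℕ) :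
      IndepFun (fun ω => if l < M ω then (1 : ℝ≥0∞) else 0) (fun ω => g (T l ω)) P :=
    hMT.comp (φ := fun n => if l < n then 1 else 0) (ψ := fun t : ℕ → β => g (t l)) .of_discrete
      (hg.comp (measurable_pi_apply l))
  have hindicator (l : ℕ) : Measurable fun ω => if l < M ω then (1 : ℝ≥0∞) else 0 :=
    measurable_const.ite (hM .of_discrete) measurable_const
  have hterm (l : ℕ) : AEMeasurable (fun ω => g (T l ω)) P :=
    hg.comp_aemeasurable (hident l).aemeasurable_fst
  calc ∫⁻ ω, ∑ l ∈ Finset.range (M ω), g (T l ω) ∂P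
      = ∫⁻ ω, ∑' l, (if l < M ω then 1 else 0) * g (T l ω) ∂P := by
        simp_rw [tsum_ite_lt_mul_eq_sum_range]
    _ = ∑' l, P {ω | l < M ω} * ∫⁻ ω, g (T 0 ω) ∂P := by
        rw [lintegral_tsum (f := fun l ω => (if l < M ω then 1 else 0) * g (T l ω))
          fun l => (hindicator l).aemeasurable.mul (hterm l)]
        refine tsum_congr fun l => ?_
        rw [lintegral_mul_eq_lintegral_mul_lintegral_of_indepFun'' (hindicator l).aemeasurable
          (hterm l) (hind l), lintegral_ite_lt_eq_measure hM]
        exact congrArg _ ((hident l).comp hg).lintegral_eq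
    _ = (∫⁻ ω, (M ω : ℝ≥0∞) ∂P) * ∫⁻ ω, g (T 0 ω) ∂P := by
        rw [ENNReal.tsum_mul_right, lintegral_natCast_eq_tsum_measure_lt hM]

theorem natCast_mul_measure_le_sum_range_le {T : ℕ → Ω → ℕ} {M : Ω → ℕ}
    (hT : ∀ i, Measurable (T i)) (hM : Measurable M)
    (hident : ∀ i, IdentDistrib (T i) (T 0) P P) (hMT : IndepFun M (fun ω i => T i ω) P) (k : ℕ) :
    (k : ℝ≥0∞) * P {ω | k ≤ ∑ l ∈ Finset.range (M ω), T l ω}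
      ≤ (∫⁻ ω, (M ω : ℝ≥0∞) ∂P) * ∑ j ∈ Finset.range k, P {ω | j < T 0 ω} := by
  let F : ℕ × Ω → ℝ≥0∞ := fun p => ∑ l ∈ Finset.range p.1, ((min (T l p.2) k : ℕ) : ℝ≥0∞)
  have hF : Measurable F := measurable_from_prod_countable_right fun n =>
    Finset.measurable_sum (Finset.range n) fun l _ =>
      (Measurable.of_discrete (f := fun m : ℕ => ((min m k : ℕ) : ℝ≥0∞))).comp (hT l)
  let S : Ω → ℝ≥0∞ := fun ω => F (M ω, ω)
  have hS : Measurable S := hF.comp (hM.prodMk measurable_id)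
  calc (k : ℝ≥0∞) * P {ω | k ≤ ∑ l ∈ Finset.range (M ω), T l ω}
      ≤ k * P {ω | (k : ℝ≥0∞) ≤ S ω} := by
        refine mul_le_mul_right (measure_mono fun ω hω => ?_) _
        show (k : ℝ≥0∞) ≤ ∑ l ∈ Finset.range (M ω), ((min (T l ω) k : ℕ) : ℝ≥0∞)
        exact_mod_cast le_sum_min_of_le_sum hω
    _ ≤ ∫⁻ ω, S ω ∂P := mul_meas_ge_le_lintegral₀ hS.aemeasurable _
    _ = _ := by
        rw [lintegral_sum_range_eq_mul (g := fun n => ((min n k : ℕ) : ℝ≥0∞)) .of_discrete hM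
          hident hMT, lintegral_min_natCast_eq_sum_measure_lt (hT 0)]

theorem sum_range_measure_lt_le_of_tail {X : Ω → ℕ} {K a : ℝ} (hK : 0 ≤ K) (ha0 : 0 ≤ a)
    (ha1 : a < 1) (htail : ∀ k : ℕ, 1 ≤ k → P {ω | k ≤ X ω} ≤ ENNReal.ofReal (K * (k : ℝ) ^ (-a)))
    (k : ℕ) :
    ∑ j ∈ Finset.range k, P {ω | j < X ω} ≤ ENNReal.ofReal (K * ((k : ℝ) ^ (1 - a) / (1 - a))) :=
  calc ∑ j ∈ Finset.range k, P {ω | j < X ω}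
      ≤ ∑ j ∈ Finset.range k, ENNReal.ofReal (K * ((j : ℝ) + 1) ^ (-a)) := by
        refine Finset.sum_le_sum fun j _ => ?_
        have h := htail (j + 1) (by omega)
        push_cast at h
        exact h
    _ = ENNReal.ofReal (K * ∑ j ∈ Finset.range k, ((j : ℝ) + 1) ^ (-a)) := by
        rw [Finset.mul_sum, ENNReal.ofReal_sum_of_nonneg fun j _ => by positivity]
    _ ≤ _ := ENNReal.ofReal_le_ofReal
        (mul_le_mul_of_nonneg_left (sum_range_add_one_rpow_neg_le ha0 ha1 k) hK)

end RandomSum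

/-- tail bound for a random sum `Σ_{l<M} T_l` of i.i.d. variables
with `P(T ≥ k) ≤ K k^{-1/δ}`, with random index `M` independent of the
summands: `P(Σ_{l<M} T_l ≥ k) ≤ c_δ K E[M] k^{-1/δ}`. -/
theorem stmt_15 (δ : ℝ) (hδ : 1 < δ) :
    ∃ c : ℝ, 0 < c ∧
      ∀ (Ω : Type) (_ : MeasurableSpace Ω) (P : Measure Ω),
        IsProbabilityMeasure P →
        ∀ K : ℝ, 0 < K →
        ∀ (T : ℕ → Ω → ℕ) (M : Ω → ℕ),
          (∀ i, Measurable (T i)) → Measurable M →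
          iIndepFun T P →
          (∀ i, IdentDistrib (T i) (T 0) P P) →
          IndepFun M (fun ω => fun i => T i ω) P →
          Integrable (fun ω => (M ω : ℝ)) P →
          (∀ k : ℕ, 1 ≤ k →
            P {ω | k ≤ T 0 ω} ≤ ENNReal.ofReal (K * (k:ℝ) ^ (-(1:ℝ)/δ))) →
          ∀ k : ℕ, 1 ≤ k →
            P {ω | k ≤ ∑ l ∈ Finset.range (M ω), T l ω}
              ≤ ENNReal.ofReal
                  (c * K * (∫ ω, (M ω : ℝ) ∂P) * (k:ℝ) ^ (-(1:ℝ)/δ)) := by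
  have ha0 : 0 ≤ 1 / δ := by positivity
  have ha1 : 1 / δ < 1 := (div_lt_one (by linarith)).mpr hδ
  have h1a : 0 < 1 - 1 / δ := sub_pos.mpr ha1
  refine ⟨1 / (1 - 1 / δ), by positivity, ?_⟩
  intro Ω _ P _ K hK T M hT hM _ hident hMT hint htail k hk
  rw [neg_div] at htail ⊢
  have hEM : ∫⁻ ω, (M ω : ℝ≥0∞) ∂P = ENNReal.ofReal (∫ ω, (M ω : ℝ) ∂P) := by
    rw [ofReal_integral_eq_lintegral_ofReal hint (ae_of_all _ fun ω => Nat.cast_nonneg _)]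
    simp
  have hk0 : (k : ℝ≥0∞) ≠ 0 := by exact_mod_cast (by omega : k ≠ 0)
  rw [← ENNReal.mul_le_mul_iff_right hk0 (ENNReal.natCast_ne_top k)]
  calc (k : ℝ≥0∞) * P {ω | k ≤ ∑ l ∈ Finset.range (M ω), T l ω}
      ≤ (∫⁻ ω, (M ω : ℝ≥0∞) ∂P) * ∑ j ∈ Finset.range k, P {ω | j < T 0 ω} :=
        natCast_mul_measure_le_sum_range_le hT hM hident hMT k
    _ ≤ ENNReal.ofReal (∫ ω, (M ω : ℝ) ∂P)
          * ENNReal.ofReal (K * ((k : ℝ) ^ (1 - 1 / δ) / (1 - 1 / δ))) := by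
        rw [hEM]
        gcongr
        exact sum_range_measure_lt_le_of_tail hK.le ha0 ha1 htail k
    _ = _ := by
        rw [← ENNReal.ofReal_mul (integral_nonneg fun ω => Nat.cast_nonneg _),
          ← ENNReal.ofReal_natCast, ← ENNReal.ofReal_mul (Nat.cast_nonneg k), sub_eq_add_neg,
          Real.rpow_add (by exact_mod_cast hk), Real.rpow_one]
        congr 1
        ring
end

section
/- Let F be a distribution function satisfying 1 - F(x) ≤ c_F x^{-(τ-1)} for large x with τ > 3, let W have law F and W_n have the empirical law F_n of the weights w_j = [1-F]^{-1}(j/n), and let ν = E[W²]/E[W], ν_n = E[W_n²]/E[W_n], and ν̃_n = (1+ε_n)ν_n. Then there is a constant c > 0 such that |ν̃_n - ν| ≤ c(|ε_n| + n^{-(τ-3)/(τ-1)}). -/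
open MeasureTheory Set Filter

/-!
The weights are the upper quantile function `g = [1 - F]⁻¹` sampled at `j / n`, and `g` pushes
Lebesgue measure on `(0, 1)` forward to the law of `W`. Hence `E[W ^ p] = ∫₀¹ g ^ p`, while
`E[W_n ^ p]` is a right-endpoint Riemann sum of the antitone function `g ^ p`; the two differ by at
most `∫₀^{1/n} g ^ p`. The tail bound gives `g u ≤ A u ^ (-1/(τ-1))`, so for `p ≤ 2` this error is
`O(n ^ (-(τ-3)/(τ-1)))`. Both moments converge at this rate, the ratio `ν_n` inherits it, the
perturbation `ε_n` contributes `O(|ε_n|)`, and the finitely many small `n` are absorbed in `c`.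
-/

section RiemannSum

variable {G : ℝ → ℝ} {n : ℕ} {K s : ℝ}

lemma sum_Icc_one_eq_sum_range (f : ℕ → ℝ) (n : ℕ) :
    ∑ j ∈ Finset.Icc 1 n, f j = ∑ i ∈ Finset.range n, f (i + 1) := by
  rw [Finset.range_eq_Ico, Finset.sum_Ico_add' f 0 n 1, zero_add, Finset.Ico_add_one_right_eq_Icc]

lemma intervalIntegrable_cell (hG : IntervalIntegrable G volume 0 1) {i : ℕ} (hi : i < n) :
    IntervalIntegrable G volume (i / n) ((i + 1) / n) := by
  have hn : (0 : ℝ) < n := by exact_mod_cast (Nat.zero_lt_of_lt hi)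
  have hi' : (i : ℝ) + 1 ≤ n := by exact_mod_cast hi
  refine hG.mono_set ?_
  rw [uIcc_of_le (by gcongr; linarith), uIcc_of_le zero_le_one]
  exact Icc_subset_Icc (by positivity) ((div_le_one hn).2 hi')

lemma sum_integral_cells (hG : IntervalIntegrable G volume 0 1) (hn : 0 < n) :
    ∑ i ∈ Finset.range n, ∫ u in (i : ℝ) / n..(i + 1) / n, G u = ∫ u in (0 : ℝ)..1, G u := by
  have := intervalIntegral.sum_integral_adjacent_intervals (f := G) (μ := volume)
    (a := fun i : ℕ => (i : ℝ) / n) (n := n) fun i hi => by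
      simpa using intervalIntegrable_cell hG hi
  simpa [div_self (show (n : ℝ) ≠ 0 by positivity)] using this

lemma integral_cell_const (c : ℝ) (i : ℕ) : ∫ _ in (i : ℝ) / n..(i + 1) / n, c = c / n := by
  rw [intervalIntegral.integral_const, smul_eq_mul]
  ring

lemma AntitoneOn.div_le_integral_cell (hanti : AntitoneOn G (Ioc 0 1))
    (hG : IntervalIntegrable G volume 0 1) {i : ℕ} (hi : i < n) :
    G ((i + 1) / n) / n ≤ ∫ u in (i : ℝ) / n..(i + 1) / n, G u := by
  have hn : (0 : ℝ) < n := by exact_mod_cast (Nat.zero_lt_of_lt hi)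
  have hi' : (i : ℝ) + 1 ≤ n := by exact_mod_cast hi
  rw [← integral_cell_const]
  refine intervalIntegral.integral_mono_on_of_le_Ioo (by gcongr; linarith)
    intervalIntegrable_const (intervalIntegrable_cell hG hi) fun u hu => ?_
  have hu0 : 0 < u := lt_of_le_of_lt (by positivity) hu.1
  exact hanti ⟨hu0, hu.2.le.trans ((div_le_one hn).2 hi')⟩
    ⟨lt_trans hu0 hu.2, (div_le_one hn).2 hi'⟩ hu.2.le

lemma AntitoneOn.integral_cell_le (hanti : AntitoneOn G (Ioc 0 1))
    (hG : IntervalIntegrable G volume 0 1) {i : ℕ} (hi0 : 0 < i) (hi : i < n) :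
    ∫ u in (i : ℝ) / n..(i + 1) / n, G u ≤ G (i / n) / n := by
  have hn : (0 : ℝ) < n := by exact_mod_cast (Nat.zero_lt_of_lt hi)
  have hi' : (i : ℝ) + 1 ≤ n := by exact_mod_cast hi
  have hi0' : (0 : ℝ) < i := by exact_mod_cast hi0
  rw [← integral_cell_const (G (i / n)) i]
  refine intervalIntegral.integral_mono_on_of_le_Ioo (by gcongr; linarith)
    (intervalIntegrable_cell hG hi) intervalIntegrable_const fun u hu => ?_
  have hu1 : u ≤ 1 := hu.2.le.trans ((div_le_one hn).2 hi')
  exact hanti ⟨by positivity, hu.1.le.trans hu1⟩ ⟨lt_trans (by positivity) hu.1, hu1⟩ hu.1.le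

theorem AntitoneOn.sum_div_le_integral (hanti : AntitoneOn G (Ioc 0 1))
    (hG : IntervalIntegrable G volume 0 1) (hn : 0 < n) :
    (∑ j ∈ Finset.Icc 1 n, G (j / n)) / n ≤ ∫ u in (0 : ℝ)..1, G u := by
  rw [← sum_integral_cells hG hn, sum_Icc_one_eq_sum_range, Finset.sum_div]
  exact Finset.sum_le_sum fun i hi => by
    simpa using hanti.div_le_integral_cell hG (Finset.mem_range.1 hi)

theorem AntitoneOn.integral_le_integral_add_sum_div (hanti : AntitoneOn G (Ioc 0 1))
    (hG : IntervalIntegrable G volume 0 1) (hG1 : 0 ≤ G 1) (hn : 0 < n) :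
    ∫ u in (0 : ℝ)..1, G u ≤
      (∫ u in (0 : ℝ)..1 / n, G u) + (∑ j ∈ Finset.Icc 1 n, G (j / n)) / n := by
  obtain ⟨m, rfl⟩ : ∃ m, n = m + 1 := ⟨n - 1, by omega⟩
  have hcells : ∀ i ∈ Finset.range m,
      ∫ u in ((i + 1 : ℕ) : ℝ) / ↑(m + 1)..((i + 1 : ℕ) + 1) / ↑(m + 1), G u
        ≤ G ((i + 1 : ℕ) / ↑(m + 1)) / ↑(m + 1) :=
    fun i hi => hanti.integral_cell_le hG i.succ_pos (by simpa using hi)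
  have hlast : 0 ≤ G ((m + 1 : ℕ) / ↑(m + 1)) / ↑(m + 1) := by
    rw [div_self (by positivity)]
    positivity
  calc ∫ u in (0 : ℝ)..1, G u
      = (∑ i ∈ Finset.range m,
          ∫ u in ((i + 1 : ℕ) : ℝ) / ↑(m + 1)..((i + 1 : ℕ) + 1) / ↑(m + 1), G u)
        + ∫ u in (0 : ℝ)..1 / ↑(m + 1), G u := by
        rw [← sum_integral_cells hG hn, Finset.sum_range_succ']
        simp
    _ ≤ (∑ i ∈ Finset.range m, G ((i + 1 : ℕ) / ↑(m + 1)) / ↑(m + 1))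
        + ∫ u in (0 : ℝ)..1 / ↑(m + 1), G u := by gcongr with i hi; exact hcells i hi
    _ ≤ _ := by
        rw [sum_Icc_one_eq_sum_range, Finset.sum_range_succ, add_div, Finset.sum_div]
        linarith

lemma integral_le_of_le_rpow {δ : ℝ} (hs : s < 1) (hδ : 0 ≤ δ)
    (hG : IntervalIntegrable G volume 0 δ) (hbound : ∀ u ∈ Ioo 0 δ, G u ≤ K * u ^ (-s)) :
    ∫ u in (0 : ℝ)..δ, G u ≤ K / (1 - s) * δ ^ (1 - s) := by
  have hrpow : IntervalIntegrable (fun u : ℝ => u ^ (-s)) volume 0 δ :=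
    intervalIntegral.intervalIntegrable_rpow' (by linarith)
  calc ∫ u in (0 : ℝ)..δ, G u ≤ ∫ u in (0 : ℝ)..δ, K * u ^ (-s) :=
        intervalIntegral.integral_mono_on_of_le_Ioo hδ hG (hrpow.const_mul K) hbound
    _ = K / (1 - s) * δ ^ (1 - s) := by
        rw [intervalIntegral.integral_const_mul, integral_rpow (Or.inl (by linarith)),
          Real.zero_rpow (by linarith), neg_add_eq_sub]
        ring

lemma AntitoneOn.intervalIntegrable_of_le_rpow (hanti : AntitoneOn G (Ioc 0 1)) (hG1 : 0 ≤ G 1)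
    (hs : s < 1) (hbound : ∀ u ∈ Ioo 0 1, G u ≤ K * u ^ (-s)) :
    IntervalIntegrable G volume 0 1 := by
  have hrpow : IntegrableOn (fun u : ℝ => K * u ^ (-s)) (Ioo 0 1) :=
    ((intervalIntegrable_iff_integrableOn_Ioo_of_le zero_le_one).1
      (intervalIntegral.intervalIntegrable_rpow' (by linarith))).const_mul K
  rw [intervalIntegrable_iff_integrableOn_Ioo_of_le zero_le_one]
  refine hrpow.mono' (aemeasurable_restrict_of_antitoneOn measurableSet_Ioo
    (hanti.mono Ioo_subset_Ioc_self)).aestronglyMeasurable ?_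
  refine (ae_restrict_iff' measurableSet_Ioo).2 (ae_of_all _ fun u hu => ?_)
  have hGu : G 1 ≤ G u := hanti ⟨hu.1, hu.2.le⟩ ⟨zero_lt_one, le_rfl⟩ hu.2.le
  rw [Real.norm_of_nonneg (hG1.trans hGu)]
  exact hbound u hu

theorem AntitoneOn.sum_div_sub_integral_isBigO (hanti : AntitoneOn G (Ioc 0 1)) (hG1 : 0 ≤ G 1)
    (hs : s < 1) (hbound : ∀ u ∈ Ioo 0 1, G u ≤ K * u ^ (-s)) :
    (fun n : ℕ => (∑ j ∈ Finset.Icc 1 n, G (j / n)) / n - ∫ u in (0 : ℝ)..1, G u)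
      =O[atTop] fun n : ℕ => (n : ℝ) ^ (-(1 - s)) := by
  have hG := hanti.intervalIntegrable_of_le_rpow hG1 hs hbound
  refine Asymptotics.IsBigO.of_bound (K / (1 - s)) ?_
  filter_upwards [eventually_gt_atTop 0] with n hn
  have hn' : (0 : ℝ) < n := by exact_mod_cast hn
  have h1n : 1 / (n : ℝ) ≤ 1 := (div_le_one hn').2 (by exact_mod_cast hn)
  have htail := integral_le_of_le_rpow hs (by positivity) (hG.mono_set (by
    rw [uIcc_of_le (by positivity), uIcc_of_le zero_le_one]; exact Icc_subset_Icc le_rfl h1n))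
    fun u hu => hbound u ⟨hu.1, hu.2.trans_le h1n⟩
  have hup := hanti.sum_div_le_integral hG hn
  have hlow := hanti.integral_le_integral_add_sum_div hG hG1 hn
  rw [one_div, Real.inv_rpow hn'.le, ← Real.rpow_neg hn'.le] at htail
  rw [one_div] at hlow
  rw [Real.norm_eq_abs, Real.norm_eq_abs, abs_of_nonpos (sub_nonpos.2 hup),
    abs_of_pos (Real.rpow_pos_of_pos hn' _)]
  linarith

end RiemannSum

section Asymptotics

variable {ι : Type*} {l : Filter ι} {r : ι → ℝ}

lemma div_sub_div_isBigO {a b : ι → ℝ} {A B : ℝ} (ha : (fun i => a i - A) =O[l] r)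
    (hb : (fun i => b i - B) =O[l] r) (hr : Tendsto r l (nhds 0)) (hB : B ≠ 0) :
    (fun i => a i / b i - A / B) =O[l] r := by
  have hbB : Tendsto b l (nhds B) := tendsto_sub_nhds_zero_iff.1 (hb.trans_tendsto hr)
  have hinv : (fun i => (b i)⁻¹) =O[l] fun _ => (1 : ℝ) := (hbB.inv₀ hB).isBigO_one ℝ
  refine (hinv.mul (ha.sub (hb.const_mul_left (A / B)))).congr' ?_ (by simp)
  filter_upwards [hbB.eventually_ne hB] with i hi
  field_simp
  ring

lemma one_add_mul_sub_isBigO {v ε : ι → ℝ} {ν : ℝ} (hv : (fun i => v i - ν) =O[l] r)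
    (hr : Tendsto r l (nhds 0)) (hr0 : ∀ᶠ i in l, 0 ≤ r i) :
    (fun i => (1 + ε i) * v i - ν) =O[l] fun i => |ε i| + r i := by
  have hvν : Tendsto v l (nhds ν) := tendsto_sub_nhds_zero_iff.1 (hv.trans_tendsto hr)
  have hr_le : r =O[l] fun i => |ε i| + r i :=
    Asymptotics.IsBigO.of_bound 1 <| hr0.mono fun i hi => by
      rw [Real.norm_of_nonneg hi, Real.norm_of_nonneg (by positivity)]
      linarith [abs_nonneg (ε i)]
  have hε_le : ε =O[l] fun i => |ε i| + r i :=
    Asymptotics.IsBigO.of_bound 1 <| hr0.mono fun i hi => by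
      rw [Real.norm_eq_abs, Real.norm_of_nonneg (by positivity)]
      linarith
  have hεv : (fun i => ε i * v i) =O[l] fun i => |ε i| + r i :=
    ((Asymptotics.isBigO_refl ε l).mul (hvν.isBigO_one ℝ)).trans (by simpa using hε_le)
  exact ((hv.trans hr_le).add hεv).congr_left fun i => by ring

end Asymptotics

-- `[1 - F]⁻¹` in the paper. At `u = 1` the set is all of `ℝ`, and `sInf univ = 0` gives
-- `upperQuantile F 1 = 0`, in line with the convention `w n n = 0`.
noncomputable def upperQuantile (F : ℝ → ℝ) (u : ℝ) : ℝ := sInf {s : ℝ | 1 - F s ≤ u}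

section UpperQuantile

variable {F : ℝ → ℝ} {u x : ℝ}

lemma nonneg_of_monotone_of_eq_zero (hmono : Monotone F) (hF0 : ∀ x < 0, F x = 0) (x : ℝ) :
    0 ≤ F x :=
  (hF0 (min x (-1)) (by simp)).symm.le.trans (hmono (min_le_left _ _))

lemma upperQuantile_le (hF0 : ∀ x < 0, F x = 0) (hu : u < 1) (hx : 1 - F x ≤ u) :
    upperQuantile F u ≤ x :=
  csInf_le ⟨0, fun s (hs : 1 - F s ≤ u) => not_lt.1 fun h => by rw [hF0 s h] at hs; linarith⟩ hx

lemma one_sub_apply_upperQuantile_le (hmono : Monotone F)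
    (hrc : ∀ x, ContinuousWithinAt F (Ici x) x) (htop : Tendsto F atTop (nhds 1)) (hu : 0 < u) :
    1 - F (upperQuantile F u) ≤ u := by
  have hne : {s : ℝ | 1 - F s ≤ u}.Nonempty :=
    (htop.eventually (eventually_gt_nhds (show 1 - u < 1 by linarith))).exists.imp
      fun s hs => show 1 - F s ≤ u by linarith
  have hright : ∀ s > upperQuantile F u, 1 - u ≤ F s := fun s hs => by
    obtain ⟨s', hs', hlt⟩ := exists_lt_of_csInf_lt hne hs
    linarith [hmono hlt.le, show 1 - F s' ≤ u from hs']
  have := ge_of_tendsto ((hrc _).mono_left (nhdsWithin_mono _ Ioi_subset_Ici_self))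
    (eventually_nhdsWithin_of_forall hright)
  linarith

lemma upperQuantile_le_iff (hmono : Monotone F) (hrc : ∀ x, ContinuousWithinAt F (Ici x) x)
    (htop : Tendsto F atTop (nhds 1)) (hF0 : ∀ x < 0, F x = 0) (hu : u ∈ Ioo 0 1) :
    upperQuantile F u ≤ x ↔ 1 - F x ≤ u :=
  ⟨fun h => by linarith [hmono h, one_sub_apply_upperQuantile_le hmono hrc htop hu.1],
    upperQuantile_le hF0 hu.2⟩

lemma upperQuantile_one (hmono : Monotone F) (hF0 : ∀ x < 0, F x = 0) : upperQuantile F 1 = 0 := by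
  have huniv : {s : ℝ | 1 - F s ≤ 1} = univ :=
    eq_univ_of_forall fun s => show 1 - F s ≤ 1 by
      linarith [nonneg_of_monotone_of_eq_zero hmono hF0 s]
  rw [upperQuantile, huniv, Real.sInf_univ]

lemma upperQuantile_nonneg (hmono : Monotone F) (hrc : ∀ x, ContinuousWithinAt F (Ici x) x)
    (htop : Tendsto F atTop (nhds 1)) (hF0 : ∀ x < 0, F x = 0) (hu : u ∈ Ioc 0 1) :
    0 ≤ upperQuantile F u := by
  rcases hu.2.eq_or_lt with rfl | hu1
  · rw [upperQuantile_one hmono hF0]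
  · refine not_lt.1 fun hneg => ?_
    have := one_sub_apply_upperQuantile_le hmono hrc htop hu.1
    rw [hF0 _ hneg] at this
    linarith

lemma antitoneOn_upperQuantile (hmono : Monotone F) (hrc : ∀ x, ContinuousWithinAt F (Ici x) x)
    (htop : Tendsto F atTop (nhds 1)) (hF0 : ∀ x < 0, F x = 0) :
    AntitoneOn (upperQuantile F) (Ioc 0 1) := by
  intro u hu v hv huv
  rcases hv.2.eq_or_lt with rfl | hv1
  · rw [upperQuantile_one hmono hF0]
    exact upperQuantile_nonneg hmono hrc htop hF0 hu
  · exact upperQuantile_le hF0 hv1 ((one_sub_apply_upperQuantile_le hmono hrc htop hu.1).trans huv)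

theorem map_upperQuantile (hmono : Monotone F) (hrc : ∀ x, ContinuousWithinAt F (Ici x) x)
    (htop : Tendsto F atTop (nhds 1)) (hF0 : ∀ x < 0, F x = 0) (μ : Measure ℝ)
    [IsProbabilityMeasure μ] (hcdf : ∀ x, μ (Iic x) = ENNReal.ofReal (F x)) :
    (volume.restrict (Ioo 0 1)).map (upperQuantile F) = μ := by
  have hmeas : AEMeasurable (upperQuantile F) (volume.restrict (Ioo 0 1)) :=
    aemeasurable_restrict_of_antitoneOn measurableSet_Ioo
      ((antitoneOn_upperQuantile hmono hrc htop hF0).mono Ioo_subset_Ioc_self)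
  refine (μ.ext_of_Iic _ fun x => ?_).symm
  have hF1 : F x ≤ 1 := hmono.ge_of_tendsto htop x
  have hF0x := nonneg_of_monotone_of_eq_zero hmono hF0 x
  have hset : upperQuantile F ⁻¹' Iic x ∩ Ioo 0 1 = Ici (1 - F x) ∩ Ioo 0 1 := by
    ext u
    simp only [mem_inter_iff, mem_preimage, mem_Iic, mem_Ici]
    exact ⟨fun h => ⟨(upperQuantile_le_iff hmono hrc htop hF0 h.2).1 h.1, h.2⟩,
      fun h => ⟨(upperQuantile_le_iff hmono hrc htop hF0 h.2).2 h.1, h.2⟩⟩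
  have hIcc : Ici (1 - F x) ∩ Icc 0 1 = Icc (1 - F x) 1 := by
    ext u
    simp only [mem_inter_iff, mem_Ici, mem_Icc]
    exact ⟨fun h => ⟨h.1, h.2.2⟩, fun h => ⟨h.1, by linarith [h.1], h.2⟩⟩
  rw [hcdf, Measure.map_apply_of_aemeasurable hmeas measurableSet_Iic,
    Measure.restrict_apply' measurableSet_Ioo, hset,
    measure_congr ((EventuallyEq.refl _ _).inter Ioo_ae_eq_Icc), hIcc, Real.volume_Icc,
    sub_sub_cancel]

lemma upperQuantile_le_mul_rpow (hF0 : ∀ x < 0, F x = 0) {c k x₀ : ℝ} (hc : 0 < c) (hk : 0 < k)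
    (htail : ∀ x ≥ x₀, 1 - F x ≤ c * x ^ (-k)) :
    ∃ A > 0, ∀ u ∈ Ioo 0 1, upperQuantile F u ≤ A * u ^ (-k⁻¹) := by
  refine ⟨max x₀ 1 + c ^ k⁻¹, by positivity, fun u hu => ?_⟩
  have hck : 0 < c ^ k⁻¹ := Real.rpow_pos_of_pos hc _
  have huk : 1 ≤ u ^ (-k⁻¹) :=
    Real.one_le_rpow_of_pos_of_le_one_of_nonpos hu.1 hu.2.le (by simp [hk.le])
  set y := c ^ k⁻¹ * u ^ (-k⁻¹)
  have hy : 0 < y := by positivity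
  -- `y = (c / u) ^ (1 / k)` is where the tail bound `c * x ^ (-k)` reaches `u`
  have hyk : c * y ^ (-k) = u := by
    rw [Real.mul_rpow hck.le (by positivity), ← Real.rpow_mul hc.le, ← Real.rpow_mul hu.1.le,
      show k⁻¹ * -k = -1 by field_simp, show -k⁻¹ * -k = 1 by field_simp, Real.rpow_neg_one,
      Real.rpow_one, mul_inv_cancel_left₀ hc.ne']
  set X := max (max x₀ 1) y
  have hX : 1 - F X ≤ u := by
    calc 1 - F X ≤ c * X ^ (-k) := htail X (le_max_of_le_left (le_max_left _ _))
      _ ≤ c * y ^ (-k) :=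
          mul_le_mul_of_nonneg_left
            (Real.rpow_le_rpow_of_nonpos hy (le_max_right _ _) (by linarith)) hc.le
      _ = u := hyk
  calc upperQuantile F u ≤ X := upperQuantile_le hF0 hu.2 hX
    _ ≤ max x₀ 1 * u ^ (-k⁻¹) + c ^ k⁻¹ * u ^ (-k⁻¹) := by
        have h1 : max x₀ 1 ≤ max x₀ 1 * u ^ (-k⁻¹) := le_mul_of_one_le_right (by positivity) huk
        have h2 : 0 ≤ max x₀ 1 * u ^ (-k⁻¹) := by positivity
        exact max_le (by linarith) (by linarith)
    _ = (max x₀ 1 + c ^ k⁻¹) * u ^ (-k⁻¹) := by ring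

end UpperQuantile

theorem sum_upperQuantile_pow_sub_moment_isBigO {F : ℝ → ℝ} (hmono : Monotone F)
    (hrc : ∀ x, ContinuousWithinAt F (Ici x) x) (htop : Tendsto F atTop (nhds 1))
    (hF0 : ∀ x < 0, F x = 0) (μ : Measure ℝ) [IsProbabilityMeasure μ]
    (hcdf : ∀ x, μ (Iic x) = ENNReal.ofReal (F x)) {A β : ℝ} (hA : 0 ≤ A)
    (hbound : ∀ u ∈ Ioo 0 1, upperQuantile F u ≤ A * u ^ (-β)) {p : ℕ} {s : ℝ}
    (hps : p * β ≤ s) (hs : s < 1) :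
    (fun n : ℕ => (∑ j ∈ Finset.Icc 1 n, upperQuantile F (j / n) ^ p) / n - ∫ x, x ^ p ∂μ)
      =O[atTop] fun n : ℕ => (n : ℝ) ^ (-(1 - s)) := by
  have hanti := antitoneOn_upperQuantile hmono hrc htop hF0
  have hnonneg := fun u (hu : u ∈ Ioc (0 : ℝ) 1) => upperQuantile_nonneg hmono hrc htop hF0 hu
  have hmoment : ∫ x, x ^ p ∂μ = ∫ u in (0 : ℝ)..1, upperQuantile F u ^ p := by
    rw [← map_upperQuantile hmono hrc htop hF0 μ hcdf,
      integral_map (aemeasurable_restrict_of_antitoneOn measurableSet_Ioo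
        (hanti.mono Ioo_subset_Ioc_self)) (continuous_pow p).aestronglyMeasurable,
      intervalIntegral.integral_of_le zero_le_one, integral_Ioc_eq_integral_Ioo]
  rw [hmoment]
  refine AntitoneOn.sum_div_sub_integral_isBigO (K := A ^ p)
    (fun u hu v hv huv => pow_le_pow_left₀ (hnonneg v hv) (hanti hu hv huv) p)
    (pow_nonneg (hnonneg 1 ⟨one_pos, le_rfl⟩) p) hs fun u hu => ?_
  calc upperQuantile F u ^ p ≤ (A * u ^ (-β)) ^ p :=
        pow_le_pow_left₀ (hnonneg u ⟨hu.1, hu.2.le⟩) (hbound u hu) p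
    _ = A ^ p * u ^ (-(p * β)) := by
        rw [mul_pow, ← Real.rpow_natCast (u ^ (-β)), ← Real.rpow_mul hu.1.le, neg_mul, mul_comm β]
    _ ≤ A ^ p * u ^ (-s) := mul_le_mul_of_nonneg_left
        (Real.rpow_le_rpow_of_exponent_ge hu.1 hu.2.le (by linarith)) (by positivity)

theorem stmt_18_general (F : ℝ → ℝ) (τ cF : ℝ) (hτ : 3 < τ) (hcF : 0 < cF)
    (hmono : Monotone F)
    (hrc : ∀ x, ContinuousWithinAt F (Set.Ici x) x)
    (htop : Tendsto F atTop (nhds 1))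
    (hFneg : ∀ x < (0:ℝ), F x = 0)
    (htail : ∃ x0 : ℝ, ∀ x ≥ x0, 1 - F x ≤ cF * x ^ (-(τ - 1)))
    (μ : Measure ℝ) [IsProbabilityMeasure μ]
    (hcdf : ∀ x, μ (Set.Iic x) = ENNReal.ofReal (F x))
    (hmean : 0 < ∫ w, w ∂μ)
    (w : ℕ → ℕ → ℝ)
    (hw : ∀ n j, 1 ≤ j → j < n → w n j = sInf {s : ℝ | 1 - F s ≤ (j:ℝ)/n})
    (hwn : ∀ n, w n n = 0)
    (ε : ℕ → ℝ) :
    ∃ c : ℝ, 0 < c ∧ ∀ n : ℕ, 1 ≤ n →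
      |(1 + ε n) * ((∑ j ∈ Finset.Icc 1 n, (w n j) ^ 2) /
            (∑ j ∈ Finset.Icc 1 n, w n j))
          - (∫ x, x ^ 2 ∂μ) / (∫ x, x ∂μ)|
        ≤ c * (|ε n| + (n:ℝ) ^ (-(τ - 3)/(τ - 1))) := by
  have hτ1 : 0 < τ - 1 := by linarith
  set α := 1 - 2 * (τ - 1)⁻¹ with hα
  have hα0 : 0 < α := by
    rw [hα, sub_pos, ← div_eq_mul_inv, div_lt_one hτ1]
    linarith
  rw [show -(τ - 3) / (τ - 1) = -α by rw [hα]; field_simp; ring]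
  obtain ⟨x₀, hx₀⟩ := htail
  obtain ⟨A, hA, hAq⟩ := upperQuantile_le_mul_rpow hFneg hcF hτ1 hx₀
  have hwq : ∀ n j, j ∈ Finset.Icc 1 n → w n j = upperQuantile F (j / n) := fun n j hj => by
    obtain ⟨hj1, hjn⟩ := Finset.mem_Icc.1 hj
    rcases hjn.lt_or_eq with hjn | rfl
    · exact hw n j hj1 hjn
    · rw [hwn, div_self (by positivity), upperQuantile_one hmono hFneg]
  have hmoment : ∀ p : ℕ, p ≤ 2 → (fun n : ℕ => (∑ j ∈ Finset.Icc 1 n, w n j ^ p) / n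
      - ∫ x, x ^ p ∂μ) =O[atTop] fun n : ℕ => (n : ℝ) ^ (-α) := fun p hp =>
    (sum_upperQuantile_pow_sub_moment_isBigO hmono hrc htop hFneg μ hcdf hA.le hAq
      (mul_le_mul_of_nonneg_right (by exact_mod_cast hp) (inv_nonneg.2 hτ1.le))
      (by linarith)).congr_left fun n => by
        rw [Finset.sum_congr rfl fun j hj => by rw [← hwq n j hj]]
  have hr : Tendsto (fun n : ℕ => (n : ℝ) ^ (-α)) atTop (nhds 0) :=
    (tendsto_rpow_neg_atTop hα0).comp tendsto_natCast_atTop_atTop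
  have hmoment1 := hmoment 1 one_le_two
  simp only [pow_one] at hmoment1
  have hkey := one_add_mul_sub_isBigO (ε := ε) (div_sub_div_isBigO (hmoment 2 le_rfl) hmoment1
    hr hmean.ne') hr (Eventually.of_forall fun n => by positivity)
  rw [← Nat.cofinite_eq_atTop] at hkey
  obtain ⟨c, hc, hbound⟩ := Asymptotics.bound_of_isBigO_cofinite hkey
  refine ⟨c, hc, fun n hn => ?_⟩
  have hn' : (0 : ℝ) < n := by exact_mod_cast hn
  have hpos : 0 < |ε n| + (n : ℝ) ^ (-α) := by positivity
  have := hbound hpos.ne'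
  rwa [Real.norm_eq_abs, Real.norm_of_nonneg hpos.le, div_div_div_cancel_right₀ hn'.ne'] at this

/-- with `ν = E[W²]/E[W]`, `ν_n = (Σ w_j²)/(Σ w_j)` for the weights
`w_j = [1-F]⁻¹(j/n)`, and `ν̃_n = (1+ε_n)ν_n`, a power-law tail bound with
exponent `τ-1`, `τ > 3`, gives `|ν̃_n - ν| ≤ c(|ε_n| + n^{-(τ-3)/(τ-1)})`. -/
theorem stmt_18 (F : ℝ → ℝ) (τ cF : ℝ) (hτ : 3 < τ) (hcF : 0 < cF)
    (hmono : Monotone F)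
    (hrc : ∀ x, ContinuousWithinAt F (Set.Ici x) x)
    (hbot : Tendsto F atBot (nhds 0))
    (htop : Tendsto F atTop (nhds 1))
    (hFneg : ∀ x < (0:ℝ), F x = 0)
    (htail : ∃ x0 : ℝ, ∀ x ≥ x0, 1 - F x ≤ cF * x ^ (-(τ - 1)))
    (μ : Measure ℝ) [IsProbabilityMeasure μ]
    (hcdf : ∀ x, μ (Set.Iic x) = ENNReal.ofReal (F x))
    (hmean : 0 < ∫ w, w ∂μ)
    (w : ℕ → ℕ → ℝ)
    (hw : ∀ n j, 1 ≤ j → j < n → w n j = sInf {s : ℝ | 1 - F s ≤ (j:ℝ)/n})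
    (hwn : ∀ n, w n n = 0)
    (ε : ℕ → ℝ) :
    ∃ c : ℝ, 0 < c ∧ ∀ n : ℕ, 1 ≤ n →
      |(1 + ε n) * ((∑ j ∈ Finset.Icc 1 n, (w n j) ^ 2) /
            (∑ j ∈ Finset.Icc 1 n, w n j))
          - (∫ x, x ^ 2 ∂μ) / (∫ x, x ∂μ)|
        ≤ c * (|ε n| + (n:ℝ) ^ (-(τ - 3)/(τ - 1))) :=
  stmt_18_general F τ cF hτ hcF hmono hrc htop hFneg htail μ hcdf hmean w hw hwn ε
end
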